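/- arXiv:2502.20423 — 11 statements merged into one kernel-verified Lean document; each statement's English description precedes it below -/
import Mathlib

section
/- Let (Ω, 𝒫) be a probability space and X : Ω → ℝ a random variable with r_min ≤ X ≤ r_max almost surely. Let β < 0 and 0 < ε < −β. Then EntRM_β[X] ≤ EntRM_{β+ε}[X] ≤ (β/(β+ε))·EntRM_β[X] + (ε/(β+ε))·r_min, and (β/(β−ε))·EntRM_β[X] − (ε/(β−ε))·r_min ≤ EntRM_{β−ε}[X] ≤ EntRM_β[X]. -/
open MeasureTheory

/-- Entropic risk measure of a real random variable `X` under measure `μ`. -/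
noncomputable def entRM {Ω : Type*} [MeasurableSpace Ω] (μ : Measure Ω) (β : ℝ) (X : Ω → ℝ) : ℝ :=
  if β = 0 then ∫ ω, X ω ∂μ else (1 / β) * Real.log (∫ ω, Real.exp (β * X ω) ∂μ)

lemma aux_int {Ω : Type*} [MeasurableSpace Ω] (μ : Measure Ω) [IsProbabilityMeasure μ]
    (X : Ω → ℝ) (hX : Measurable X) (rmin rmax : ℝ)
    (hbdd : ∀ᵐ ω ∂μ, rmin ≤ X ω ∧ X ω ≤ rmax) (b : ℝ) :
    Integrable (fun ω => Real.exp (b * X ω)) μ := by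
  apply Integrable.mono' (integrable_const (Real.exp (|b| * max |rmin| |rmax|)))
    ((hX.const_mul b).exp.aestronglyMeasurable)
  filter_upwards [hbdd] with ω h
  rw [Real.norm_eq_abs, abs_of_pos (Real.exp_pos _)]
  apply Real.exp_le_exp.mpr
  have hXb : |X ω| ≤ max |rmin| |rmax| := by
    rw [abs_le]
    constructor
    · calc -(max |rmin| |rmax|) ≤ -|rmin| := by simp [le_max_left]
        _ ≤ rmin := neg_abs_le _
        _ ≤ X ω := h.1
    · calc X ω ≤ rmax := h.2
        _ ≤ |rmax| := le_abs_self _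
        _ ≤ max |rmin| |rmax| := le_max_right _ _
  calc b * X ω ≤ |b * X ω| := le_abs_self _
    _ = |b| * |X ω| := abs_mul _ _
    _ ≤ |b| * max |rmin| |rmax| := by gcongr

lemma aux_pos {Ω : Type*} [MeasurableSpace Ω] (μ : Measure Ω) [IsProbabilityMeasure μ]
    (X : Ω → ℝ) (hX : Measurable X) (rmin rmax : ℝ)
    (hbdd : ∀ᵐ ω ∂μ, rmin ≤ X ω ∧ X ω ≤ rmax) (b : ℝ) (hb : b < 0) :
    0 < ∫ ω, Real.exp (b * X ω) ∂μ := by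
  have h1 : Real.exp (b * rmax) = ∫ _ω, Real.exp (b * rmax) ∂μ := by simp
  calc (0:ℝ) < Real.exp (b * rmax) := Real.exp_pos _
    _ ≤ ∫ ω, Real.exp (b * X ω) ∂μ := by
        rw [h1]
        apply integral_mono_ae (integrable_const _) (aux_int μ X hX rmin rmax hbdd b)
        filter_upwards [hbdd] with ω h
        exact Real.exp_le_exp.mpr (by nlinarith [h.2])

/-- Jensen: for `b < c < 0`, `c * log ∫ exp(bX) ≤ b * log ∫ exp(cX)`. -/
lemma aux_jensen {Ω : Type*} [MeasurableSpace Ω] (μ : Measure Ω) [IsProbabilityMeasure μ]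
    (X : Ω → ℝ) (hX : Measurable X) (rmin rmax : ℝ)
    (hbdd : ∀ᵐ ω ∂μ, rmin ≤ X ω ∧ X ω ≤ rmax) (b c : ℝ) (hbc : b < c) (hc : c < 0) :
    c * Real.log (∫ ω, Real.exp (b * X ω) ∂μ) ≤
      b * Real.log (∫ ω, Real.exp (c * X ω) ∂μ) := by
  have hb : b < 0 := hbc.trans hc
  have hc0 : c ≠ 0 := ne_of_lt hc
  have hθ : 1 ≤ b / c := by
    rw [le_div_iff_of_neg hc]; linarith
  have hcomp : ∀ ω, (Real.exp (c * X ω)) ^ (b / c) = Real.exp (b * X ω) := by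
    intro ω
    rw [← Real.exp_mul]
    congr 1
    field_simp
  have hJ := (convexOn_rpow hθ).map_integral_le
    (Real.continuous_rpow_const (by linarith : (0:ℝ) ≤ b / c)).continuousOn
    isClosed_Ici
    (Filter.Eventually.of_forall fun ω => (Real.exp_pos _).le)
    (aux_int μ X hX rmin rmax hbdd c)
    (by
      have : ((fun x : ℝ => x ^ (b / c)) ∘ fun ω => Real.exp (c * X ω)) =
          fun ω => Real.exp (b * X ω) := by
        funext ω; exact hcomp ω
      rw [this]; exact aux_int μ X hX rmin rmax hbdd b)
  have hJ' : (∫ ω, Real.exp (c * X ω) ∂μ) ^ (b / c) ≤ ∫ ω, Real.exp (b * X ω) ∂μ := by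
    calc (∫ ω, Real.exp (c * X ω) ∂μ) ^ (b / c)
        ≤ ∫ ω, (Real.exp (c * X ω)) ^ (b / c) ∂μ := hJ
      _ = ∫ ω, Real.exp (b * X ω) ∂μ := by
          apply integral_congr_ae
          exact Filter.Eventually.of_forall fun ω => hcomp ω
  have hLc := aux_pos μ X hX rmin rmax hbdd c hc
  have hlog := Real.log_le_log (Real.rpow_pos_of_pos hLc _) hJ'
  rw [Real.log_rpow hLc] at hlog
  -- hlog : (b / c) * log Lc ≤ log Lb
  have := mul_le_mul_of_nonpos_left hlog (le_of_lt hc)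
  calc c * Real.log (∫ ω, Real.exp (b * X ω) ∂μ)
      ≤ c * (b / c * Real.log (∫ ω, Real.exp (c * X ω) ∂μ)) := this
    _ = b * Real.log (∫ ω, Real.exp (c * X ω) ∂μ) := by field_simp

/-- Shift: for `b < c`, `log ∫ exp(bX) + (c - b) * rmin ≤ log ∫ exp(cX)`. -/
lemma aux_shift {Ω : Type*} [MeasurableSpace Ω] (μ : Measure Ω) [IsProbabilityMeasure μ]
    (X : Ω → ℝ) (hX : Measurable X) (rmin rmax : ℝ)
    (hbdd : ∀ᵐ ω ∂μ, rmin ≤ X ω ∧ X ω ≤ rmax) (b c : ℝ) (hbc : b < c) (hc : c < 0) :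
    Real.log (∫ ω, Real.exp (b * X ω) ∂μ) + (c - b) * rmin ≤
      Real.log (∫ ω, Real.exp (c * X ω) ∂μ) := by
  have hb : b < 0 := hbc.trans hc
  have hLb := aux_pos μ X hX rmin rmax hbdd b hb
  have hLc := aux_pos μ X hX rmin rmax hbdd c hc
  have hint : Real.exp ((c - b) * rmin) * ∫ ω, Real.exp (b * X ω) ∂μ ≤
      ∫ ω, Real.exp (c * X ω) ∂μ := by
    rw [← integral_const_mul]
    apply integral_mono_ae ((aux_int μ X hX rmin rmax hbdd b).const_mul _)
      (aux_int μ X hX rmin rmax hbdd c)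
    filter_upwards [hbdd] with ω h
    rw [← Real.exp_add]
    apply Real.exp_le_exp.mpr
    nlinarith [h.1]
  have := Real.log_le_log (by positivity) hint
  rw [Real.log_mul (ne_of_gt (Real.exp_pos _)) (ne_of_gt hLb), Real.log_exp] at this
  linarith

theorem stmt_0 {Ω : Type*} [MeasurableSpace Ω] (μ : Measure Ω) [IsProbabilityMeasure μ]
    (X : Ω → ℝ) (hX : Measurable X) (rmin rmax : ℝ)
    (hbdd : ∀ᵐ ω ∂μ, rmin ≤ X ω ∧ X ω ≤ rmax)
    (β ε : ℝ) (hβ : β < 0) (hε0 : 0 < ε) (hε : ε < -β) :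
    entRM μ β X ≤ entRM μ (β + ε) X ∧
    entRM μ (β + ε) X ≤ (β / (β + ε)) * entRM μ β X + (ε / (β + ε)) * rmin ∧
    (β / (β - ε)) * entRM μ β X - (ε / (β - ε)) * rmin ≤ entRM μ (β - ε) X ∧
    entRM μ (β - ε) X ≤ entRM μ β X := by
  have hc : β + ε < 0 := by linarith
  have hd : β - ε < 0 := by linarith
  have hβ0 : β ≠ 0 := ne_of_lt hβ
  have hc0 : β + ε ≠ 0 := ne_of_lt hc
  have hd0 : β - ε ≠ 0 := ne_of_lt hd
  set A := Real.log (∫ ω, Real.exp (β * X ω) ∂μ) with hA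
  set B := Real.log (∫ ω, Real.exp ((β + ε) * X ω) ∂μ) with hB
  set C := Real.log (∫ ω, Real.exp ((β - ε) * X ω) ∂μ) with hC
  have key1 : (β + ε) * A ≤ β * B :=
    aux_jensen μ X hX rmin rmax hbdd β (β + ε) (by linarith) hc
  have key2 : A + ε * rmin ≤ B := by
    have := aux_shift μ X hX rmin rmax hbdd β (β + ε) (by linarith) hc
    simpa using this
  have key3 : β * C ≤ (β - ε) * A :=
    aux_jensen μ X hX rmin rmax hbdd (β - ε) β (by linarith) hβ
  have key4 : C + ε * rmin ≤ A := by
    have := aux_shift μ X hX rmin rmax hbdd (β - ε) β (by linarith) hβ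
    have h2 : β - (β - ε) = ε := by ring
    rw [h2] at this
    linarith
  rw [entRM, entRM, entRM, if_neg hβ0, if_neg hc0, if_neg hd0, ← hA, ← hB, ← hC]
  have hβc : 0 < β * (β + ε) := mul_pos_of_neg_of_neg hβ hc
  have hβd : 0 < β * (β - ε) := mul_pos_of_neg_of_neg hβ hd
  refine ⟨?_, ?_, ?_, ?_⟩
  · -- (1/β) A ≤ (1/(β+ε)) B  ⟺  (β+ε) A ≤ β B
    have h := mul_le_mul_of_nonneg_right key1 (le_of_lt (by positivity : (0:ℝ) < 1 / (β * (β + ε))))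
    calc 1 / β * A = (β + ε) * A * (1 / (β * (β + ε))) := by field_simp
      _ ≤ β * B * (1 / (β * (β + ε))) := h
      _ = 1 / (β + ε) * B := by field_simp
  · have heq : β / (β + ε) * (1 / β * A) + ε / (β + ε) * rmin =
        1 / (β + ε) * (A + ε * rmin) := by field_simp
    rw [heq]
    have := mul_le_mul_of_nonpos_left key2 (by
      have : 1 / (β + ε) < 0 := div_neg_of_pos_of_neg one_pos hc
      linarith : 1 / (β + ε) ≤ 0)
    linarith
  · have heq : β / (β - ε) * (1 / β * A) - ε / (β - ε) * rmin =
        1 / (β - ε) * (A - ε * rmin) := by field_simp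
    rw [heq]
    have hk : C ≤ A - ε * rmin := by linarith
    have := mul_le_mul_of_nonpos_left hk (by
      have : 1 / (β - ε) < 0 := div_neg_of_pos_of_neg one_pos hd
      linarith : 1 / (β - ε) ≤ 0)
    linarith
  · have h := mul_le_mul_of_nonneg_right key3 (le_of_lt (by positivity : (0:ℝ) < 1 / (β * (β - ε))))
    calc 1 / (β - ε) * C = β * C * (1 / (β * (β - ε))) := by field_simp
      _ ≤ (β - ε) * A * (1 / (β * (β - ε))) := h
      _ = 1 / β * A := by field_simp
end

section
/- Let (Ω, 𝒫) be a probability space and X : Ω → ℝ a random variable that is almost surely bounded (|X| ≤ C a.s. for some C). Then the map β ↦ EntRM_β[X] is nondecreasing on ℝ: for all β₁ ≤ β₂, EntRM_{β₁}[X] ≤ EntRM_{β₂}[X]. -/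
open MeasureTheory

section Aux

variable {Ω : Type*} [MeasurableSpace Ω] {μ : Measure Ω} [IsProbabilityMeasure μ]
  {X : Ω → ℝ} {C : ℝ}

lemma entRM_aux_intX (hX : Measurable X) (hbdd : ∀ᵐ ω ∂μ, |X ω| ≤ C) :
    Integrable X μ := by
  refine Integrable.mono' (integrable_const C) hX.aestronglyMeasurable ?_
  filter_upwards [hbdd] with ω hω using hω

lemma entRM_aux_int (hX : Measurable X) (hbdd : ∀ᵐ ω ∂μ, |X ω| ≤ C) (β : ℝ) :
    Integrable (fun ω => Real.exp (β * X ω)) μ := by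
  refine Integrable.mono' (integrable_const (Real.exp (|β| * C)))
    ((hX.const_mul β).exp.aestronglyMeasurable) ?_
  filter_upwards [hbdd] with ω hω
  rw [Real.norm_eq_abs, abs_of_pos (Real.exp_pos _)]
  apply Real.exp_le_exp.2
  calc β * X ω ≤ |β * X ω| := le_abs_self _
    _ = |β| * |X ω| := abs_mul _ _
    _ ≤ |β| * C := mul_le_mul_of_nonneg_left hω (abs_nonneg β)

lemma entRM_aux_pos (hX : Measurable X) (hbdd : ∀ᵐ ω ∂μ, |X ω| ≤ C) (β : ℝ) :
    0 < ∫ ω, Real.exp (β * X ω) ∂μ :=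
  integral_exp_pos (entRM_aux_int hX hbdd β)

/-- Jensen's inequality for exp. -/
lemma entRM_aux_jensen (hX : Measurable X) (hbdd : ∀ᵐ ω ∂μ, |X ω| ≤ C) (β : ℝ) :
    β * ∫ ω, X ω ∂μ ≤ Real.log (∫ ω, Real.exp (β * X ω) ∂μ) := by
  have h := convexOn_exp.map_integral_le (f := fun ω => β * X ω)
    Real.continuous_exp.continuousOn isClosed_univ
    (Filter.Eventually.of_forall fun _ => Set.mem_univ _)
    ((entRM_aux_intX hX hbdd).const_mul β) (entRM_aux_int hX hbdd β)
  rw [integral_const_mul] at h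
  calc β * ∫ ω, X ω ∂μ = Real.log (Real.exp (β * ∫ ω, X ω ∂μ)) := (Real.log_exp _).symm
    _ ≤ Real.log (∫ ω, Real.exp (β * X ω) ∂μ) :=
      Real.log_le_log (Real.exp_pos _) h

/-- Monotonicity on the positive half-line. -/
lemma entRM_aux_mono_pos (hX : Measurable X) (hbdd : ∀ᵐ ω ∂μ, |X ω| ≤ C)
    {b₁ b₂ : ℝ} (h₁ : 0 < b₁) (h₁₂ : b₁ ≤ b₂) :
    (1 / b₁) * Real.log (∫ ω, Real.exp (b₁ * X ω) ∂μ) ≤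
      (1 / b₂) * Real.log (∫ ω, Real.exp (b₂ * X ω) ∂μ) := by
  have h₂ : 0 < b₂ := lt_of_lt_of_le h₁ h₁₂
  set r : ℝ := b₂ / b₁ with hr
  have hr1 : 1 ≤ r := (one_le_div h₁).2 h₁₂
  have hbr : b₁ * r = b₂ := by rw [hr]; field_simp
  -- Jensen for x ↦ x ^ r
  have hconv : ConvexOn ℝ (Set.Ici 0) (fun x : ℝ => x ^ r) := convexOn_rpow hr1
  have hcont : ContinuousOn (fun x : ℝ => x ^ r) (Set.Ici 0) := fun x _ =>
    (Real.continuousAt_rpow_const x r (Or.inr (by linarith))).continuousWithinAt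
  have hint : Integrable (fun ω => Real.exp (b₁ * X ω)) μ := entRM_aux_int hX hbdd b₁
  have heq : ∀ ω, (Real.exp (b₁ * X ω)) ^ r = Real.exp (b₂ * X ω) := by
    intro ω
    rw [← Real.exp_mul]
    congr 1
    rw [hr]
    field_simp
  have hint2 : Integrable ((fun x : ℝ => x ^ r) ∘ fun ω => Real.exp (b₁ * X ω)) μ := by
    refine (entRM_aux_int hX hbdd b₂).congr ?_
    exact Filter.Eventually.of_forall fun ω => (heq ω).symm
  have hjensen := hconv.map_integral_le hcont isClosed_Ici
    (Filter.Eventually.of_forall fun ω => Set.mem_Ici.2 (Real.exp_pos _).le) hint hint2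
  have hjensen' : (∫ ω, Real.exp (b₁ * X ω) ∂μ) ^ r ≤ ∫ ω, Real.exp (b₂ * X ω) ∂μ := by
    refine hjensen.trans_eq ?_
    exact integral_congr_ae (Filter.Eventually.of_forall fun ω => heq ω)
  have hpos1 := entRM_aux_pos hX hbdd (μ := μ) b₁
  have hlog : r * Real.log (∫ ω, Real.exp (b₁ * X ω) ∂μ) ≤
      Real.log (∫ ω, Real.exp (b₂ * X ω) ∂μ) := by
    calc r * Real.log (∫ ω, Real.exp (b₁ * X ω) ∂μ)
        = Real.log ((∫ ω, Real.exp (b₁ * X ω) ∂μ) ^ r) := (Real.log_rpow hpos1 r).symm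
      _ ≤ Real.log (∫ ω, Real.exp (b₂ * X ω) ∂μ) :=
        Real.log_le_log (Real.rpow_pos_of_pos hpos1 r) hjensen'
  have key : (1 / b₂) * (r * Real.log (∫ ω, Real.exp (b₁ * X ω) ∂μ)) ≤
      (1 / b₂) * Real.log (∫ ω, Real.exp (b₂ * X ω) ∂μ) :=
    mul_le_mul_of_nonneg_left hlog (by positivity)
  calc (1 / b₁) * Real.log (∫ ω, Real.exp (b₁ * X ω) ∂μ)
      = (1 / b₂) * (r * Real.log (∫ ω, Real.exp (b₁ * X ω) ∂μ)) := by
        rw [hr]; field_simp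
    _ ≤ (1 / b₂) * Real.log (∫ ω, Real.exp (b₂ * X ω) ∂μ) := key

end Aux

theorem stmt_1 {Ω : Type*} [MeasurableSpace Ω] (μ : Measure Ω) [IsProbabilityMeasure μ]
    (X : Ω → ℝ) (hX : Measurable X) (C : ℝ) (hbdd : ∀ᵐ ω ∂μ, |X ω| ≤ C) :
    ∀ β₁ β₂ : ℝ, β₁ ≤ β₂ → entRM μ β₁ X ≤ entRM μ β₂ X := by
  -- bounds for -X
  have hbdd' : ∀ᵐ ω ∂μ, |(-X) ω| ≤ C := by
    filter_upwards [hbdd] with ω hω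
    simpa [abs_neg] using hω
  -- entRM at 0 is the expectation
  have hzero : entRM μ 0 X = ∫ ω, X ω ∂μ := by simp [entRM]
  -- zero ≤ positive
  have hzp : ∀ β : ℝ, 0 < β → entRM μ 0 X ≤ entRM μ β X := by
    intro β hβ
    rw [hzero]
    have hne : β ≠ 0 := ne_of_gt hβ
    simp only [entRM, if_neg hne]
    have hj := entRM_aux_jensen hX hbdd β
    rw [← mul_le_mul_iff_right₀ hβ, ← mul_assoc]
    field_simp
    linarith
  -- negative ≤ zero
  have hnz : ∀ β : ℝ, β < 0 → entRM μ β X ≤ entRM μ 0 X := by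
    intro β hβ
    rw [hzero]
    have hne : β ≠ 0 := ne_of_lt hβ
    simp only [entRM, if_neg hne]
    have hj := entRM_aux_jensen hX hbdd β
    rw [div_mul_eq_mul_div, one_mul, div_le_iff_of_neg hβ]
    linarith [mul_comm β (∫ ω, X ω ∂μ)]
  -- positive case
  have hpp : ∀ b₁ b₂ : ℝ, 0 < b₁ → b₁ ≤ b₂ → entRM μ b₁ X ≤ entRM μ b₂ X := by
    intro b₁ b₂ h₁ h₁₂
    have h₂ : 0 < b₂ := lt_of_lt_of_le h₁ h₁₂
    simp only [entRM, if_neg (ne_of_gt h₁), if_neg (ne_of_gt h₂)]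
    exact entRM_aux_mono_pos hX hbdd h₁ h₁₂
  -- negative case via symmetry
  have hsym : ∀ β : ℝ, β ≠ 0 → entRM μ β X = -(entRM μ (-β) (-X)) := by
    intro β hβ
    have hβ' : (-β) ≠ 0 := neg_ne_zero.2 hβ
    simp only [entRM, if_neg hβ, if_neg hβ']
    have : ∀ ω, (-β) * (-X) ω = β * X ω := by intro ω; simp only [Pi.neg_apply]; ring
    simp_rw [this]
    field_simp
  have hnn : ∀ b₁ b₂ : ℝ, b₁ ≤ b₂ → b₂ < 0 → entRM μ b₁ X ≤ entRM μ b₂ X := by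
    intro b₁ b₂ h₁₂ h₂
    have h₁ : b₁ < 0 := lt_of_le_of_lt h₁₂ h₂
    rw [hsym b₁ (ne_of_lt h₁), hsym b₂ (ne_of_lt h₂)]
    have h2' : 0 < -b₂ := by linarith
    have h12' : -b₂ ≤ -b₁ := by linarith
    have hXn : Measurable (-X) := hX.neg
    have := (fun b c hb hbc => by
      have h₂' : (0:ℝ) < c := lt_of_lt_of_le hb hbc
      simp only [entRM, if_neg (ne_of_gt hb), if_neg (ne_of_gt h₂')]
      exact entRM_aux_mono_pos hXn hbdd' hb hbc :
        ∀ b c : ℝ, 0 < b → b ≤ c → entRM μ b (-X) ≤ entRM μ c (-X)) (-b₂) (-b₁) h2' h12'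
    linarith
  intro β₁ β₂ h₁₂
  rcases lt_trichotomy β₂ 0 with h₂ | h₂ | h₂
  · exact hnn β₁ β₂ h₁₂ h₂
  · subst h₂
    rcases lt_or_eq_of_le h₁₂ with h₁ | h₁
    · exact hnz β₁ h₁
    · subst h₁; exact le_refl _
  · rcases lt_trichotomy β₁ 0 with h₁ | h₁ | h₁
    · exact (hnz β₁ h₁).trans (hzp β₂ h₂)
    · subst h₁; exact hzp β₂ h₂
    · exact hpp β₁ β₂ h₁ h₁₂
end

section
/- Let A be a finite set with at least two elements and (R_a)_{a∈A} real random variables on a common probability space, each almost surely taking values in [r_min, r_max]. Let β < 0 and a₁ ∈ A be such that U₁ := EntRM_β[R_{a₁}] > EntRM_β[R_a] for every a ≠ a₁; set U₂ := max_{a ≠ a₁} EntRM_β[R_a] and ΔU := U₁ − U₂. Then for every ε > 0 satisfying ε·(U₂ − r_min) < (−β)·ΔU, and for every a ≠ a₁, EntRM_{β−ε}[R_{a₁}] > EntRM_{β−ε}[R_a]; in particular a₁ remains the strictly optimal action at β − ε. -/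
open MeasureTheory

private lemma exp_mul_integrable {Ω : Type*} [MeasurableSpace Ω] (μ : Measure Ω)
    [IsProbabilityMeasure μ] {X : Ω → ℝ} (hX : Measurable X) {rmin rmax : ℝ}
    (hb : ∀ᵐ ω ∂μ, X ω ∈ Set.Icc rmin rmax) (c : ℝ) :
    Integrable (fun ω => Real.exp (c * X ω)) μ := by
  refine Integrable.mono' (integrable_const (Real.exp (|c| * max |rmin| |rmax|))) ?_ ?_
  · exact (Real.measurable_exp.comp (hX.const_mul c)).aestronglyMeasurable
  · filter_upwards [hb] with ω hω
    rw [Real.norm_eq_abs, abs_of_pos (Real.exp_pos _)]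
    apply Real.exp_le_exp.2
    calc c * X ω ≤ |c * X ω| := le_abs_self _
      _ = |c| * |X ω| := abs_mul _ _
      _ ≤ |c| * max |rmin| |rmax| := by
          gcongr
          have h1 : -|rmin| ≤ rmin := neg_abs_le rmin
          have h2 : rmax ≤ |rmax| := le_abs_self rmax
          have h3 : |rmin| ≤ max |rmin| |rmax| := le_max_left _ _
          have h4 : |rmax| ≤ max |rmin| |rmax| := le_max_right _ _
          rw [abs_le]
          constructor <;> [linarith [hω.1]; linarith [hω.2]]

private lemma integral_exp_mul_pos {Ω : Type*} [MeasurableSpace Ω] (μ : Measure Ω)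
    [IsProbabilityMeasure μ] {X : Ω → ℝ} (hX : Measurable X) {rmin rmax : ℝ}
    (hb : ∀ᵐ ω ∂μ, X ω ∈ Set.Icc rmin rmax) (c : ℝ) :
    0 < ∫ ω, Real.exp (c * X ω) ∂μ :=
  integral_exp_pos (exp_mul_integrable μ hX hb c)

/-- Shift lower bound for `entRM` when decreasing a negative `β`. -/
private lemma entRM_shift_lower {Ω : Type*} [MeasurableSpace Ω] (μ : Measure Ω)
    [IsProbabilityMeasure μ] {X : Ω → ℝ} (hX : Measurable X) {rmin rmax : ℝ}
    (hb : ∀ᵐ ω ∂μ, X ω ∈ Set.Icc rmin rmax) {β ε : ℝ} (hβ : β < 0) (hε : 0 < ε) :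
    (β * entRM μ β X - ε * rmin) / (β - ε) ≤ entRM μ (β - ε) X := by
  have hβ' : β - ε < 0 := by linarith
  have hI : 0 < ∫ ω, Real.exp (β * X ω) ∂μ := integral_exp_mul_pos μ hX hb β
  have hI' : 0 < ∫ ω, Real.exp ((β - ε) * X ω) ∂μ := integral_exp_mul_pos μ hX hb (β - ε)
  have hle : ∫ ω, Real.exp ((β - ε) * X ω) ∂μ ≤
      Real.exp (-(ε * rmin)) * ∫ ω, Real.exp (β * X ω) ∂μ := by
    rw [← integral_const_mul]
    refine integral_mono_ae (exp_mul_integrable μ hX hb (β - ε))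
      ((exp_mul_integrable μ hX hb β).const_mul _) ?_
    filter_upwards [hb] with ω hω
    rw [← Real.exp_add]
    apply Real.exp_le_exp.2
    nlinarith [hω.1]
  have hlog : Real.log (∫ ω, Real.exp ((β - ε) * X ω) ∂μ) ≤
      -(ε * rmin) + Real.log (∫ ω, Real.exp (β * X ω) ∂μ) := by
    calc Real.log (∫ ω, Real.exp ((β - ε) * X ω) ∂μ)
        ≤ Real.log (Real.exp (-(ε * rmin)) * ∫ ω, Real.exp (β * X ω) ∂μ) :=
          Real.log_le_log hI' hle
      _ = -(ε * rmin) + Real.log (∫ ω, Real.exp (β * X ω) ∂μ) := by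
          rw [Real.log_mul (Real.exp_pos _).ne' hI.ne', Real.log_exp]
  rw [entRM, entRM, if_neg hβ.ne, if_neg hβ'.ne]
  rw [div_le_iff_of_neg hβ']
  have : (1 / (β - ε) * Real.log (∫ ω, Real.exp ((β - ε) * X ω) ∂μ)) * (β - ε) =
      Real.log (∫ ω, Real.exp ((β - ε) * X ω) ∂μ) := by
    field_simp
    rw [mul_div_cancel_left₀ _ hβ'.ne]
  rw [this]
  have hβne : β ≠ 0 := hβ.ne
  calc Real.log (∫ ω, Real.exp ((β - ε) * X ω) ∂μ)
      ≤ -(ε * rmin) + Real.log (∫ ω, Real.exp (β * X ω) ∂μ) := hlog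
    _ = β * (1 / β * Real.log (∫ ω, Real.exp (β * X ω) ∂μ)) - ε * rmin := by field_simp; ring

/-- Monotonicity of `entRM` in `β` (for negative `β`, via Jensen's inequality). -/
private lemma entRM_mono {Ω : Type*} [MeasurableSpace Ω] (μ : Measure Ω)
    [IsProbabilityMeasure μ] {X : Ω → ℝ} (hX : Measurable X) {rmin rmax : ℝ}
    (hb : ∀ᵐ ω ∂μ, X ω ∈ Set.Icc rmin rmax) {β ε : ℝ} (hβ : β < 0) (hε : 0 < ε) :
    entRM μ (β - ε) X ≤ entRM μ β X := by
  have hβ' : β - ε < 0 := by linarith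
  have hβne : β ≠ 0 := hβ.ne
  set t : ℝ := (β - ε) / β with ht
  have ht1 : 1 ≤ t := by
    rw [ht, le_div_iff_of_neg hβ]
    linarith
  have hkey : ∀ ω, Real.exp (β * X ω) ^ t = Real.exp ((β - ε) * X ω) := by
    intro ω
    rw [← Real.exp_mul]
    congr 1
    rw [ht]
    field_simp
  have hI : 0 < ∫ ω, Real.exp (β * X ω) ∂μ := integral_exp_mul_pos μ hX hb β
  have hjensen : (∫ ω, Real.exp (β * X ω) ∂μ) ^ t ≤ ∫ ω, Real.exp ((β - ε) * X ω) ∂μ := by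
    have := ConvexOn.map_integral_le (μ := μ) (f := fun ω => Real.exp (β * X ω))
      (convexOn_rpow ht1)
      (fun x hx => (Real.continuousAt_rpow_const x t (Or.inr (by linarith))).continuousWithinAt)
      isClosed_Ici
      (Filter.Eventually.of_forall fun ω => Set.mem_Ici.2 (Real.exp_pos _).le)
      (exp_mul_integrable μ hX hb β)
      (by
        simp only [Function.comp_def]
        refine (exp_mul_integrable μ hX hb (β - ε)).congr ?_
        exact Filter.Eventually.of_forall fun ω => (hkey ω).symm)
    calc (∫ ω, Real.exp (β * X ω) ∂μ) ^ t ≤ ∫ ω, Real.exp (β * X ω) ^ t ∂μ := this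
      _ = ∫ ω, Real.exp ((β - ε) * X ω) ∂μ := by
          exact integral_congr_ae (Filter.Eventually.of_forall fun ω => hkey ω)
  have hI' : 0 < ∫ ω, Real.exp ((β - ε) * X ω) ∂μ := integral_exp_mul_pos μ hX hb (β - ε)
  have hlog : t * Real.log (∫ ω, Real.exp (β * X ω) ∂μ) ≤
      Real.log (∫ ω, Real.exp ((β - ε) * X ω) ∂μ) := by
    calc t * Real.log (∫ ω, Real.exp (β * X ω) ∂μ)
        = Real.log ((∫ ω, Real.exp (β * X ω) ∂μ) ^ t) := (Real.log_rpow hI t).symm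
      _ ≤ Real.log (∫ ω, Real.exp ((β - ε) * X ω) ∂μ) := Real.log_le_log (by positivity) hjensen
  rw [entRM, entRM, if_neg hβ.ne, if_neg hβ'.ne]
  have h1 : (1 : ℝ) / (β - ε) < 0 := by
    apply div_neg_of_pos_of_neg one_pos hβ'
  calc 1 / (β - ε) * Real.log (∫ ω, Real.exp ((β - ε) * X ω) ∂μ)
      ≤ 1 / (β - ε) * (t * Real.log (∫ ω, Real.exp (β * X ω) ∂μ)) := by
        apply mul_le_mul_of_nonpos_left hlog h1.le
    _ = 1 / β * Real.log (∫ ω, Real.exp (β * X ω) ∂μ) := by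
        rw [ht, ← mul_assoc]
        congr 1
        rw [one_div, inv_mul_eq_div, div_right_comm, div_self hβ'.ne]


theorem stmt_3 {Ω A : Type*} [MeasurableSpace Ω] (μ : Measure Ω) [IsProbabilityMeasure μ]
    [Fintype A] [Nontrivial A]
    (R : A → Ω → ℝ) (hmeas : ∀ a, Measurable (R a))
    (rmin rmax : ℝ) (hbdd : ∀ a, ∀ᵐ ω ∂μ, R a ω ∈ Set.Icc rmin rmax)
    (β : ℝ) (hβ : β < 0) (a₁ : A)
    (U₁ U₂ ΔU : ℝ)
    (hU₁ : U₁ = entRM μ β (R a₁))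
    (hopt : ∀ a ≠ a₁, entRM μ β (R a) < U₁)
    (hU₂ : IsGreatest {u : ℝ | ∃ a ≠ a₁, u = entRM μ β (R a)} U₂)
    (hΔU : ΔU = U₁ - U₂)
    (ε : ℝ) (hε : 0 < ε) (hεcond : ε * (U₂ - rmin) < (-β) * ΔU) :
    ∀ a ≠ a₁, entRM μ (β - ε) (R a) < entRM μ (β - ε) (R a₁) := by
  intro a ha
  have hβ' : β - ε < 0 := by linarith
  have h1 : entRM μ (β - ε) (R a) ≤ entRM μ β (R a) :=
    entRM_mono μ (hmeas a) (hbdd a) hβ hε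
  have h2 : entRM μ β (R a) ≤ U₂ := hU₂.2 ⟨a, ha, rfl⟩
  have h3 : (β * U₁ - ε * rmin) / (β - ε) ≤ entRM μ (β - ε) (R a₁) := by
    rw [hU₁]
    exact entRM_shift_lower μ (hmeas a₁) (hbdd a₁) hβ hε
  have h4 : U₂ < (β * U₁ - ε * rmin) / (β - ε) := by
    rw [lt_div_iff_of_neg hβ']
    nlinarith [hεcond]
  linarith
end

section
/- Let A be a finite set with at least two elements and (R_a)_{a∈A} real random variables on a common probability space, each almost surely taking values in [r_min, r_max] with r_min < r_max; set ΔR := r_max − r_min. Let a₁ ∈ A be such that 𝔼[R_{a₁}] > 𝔼[R_a] for every a ≠ a₁, and set ΔU := 𝔼[R_{a₁}] − max_{a ≠ a₁} 𝔼[R_a]. Then for every β' with −8·ΔU/ΔR² < β' ≤ 0 and every a ≠ a₁, EntRM_{β'}[R_{a₁}] > EntRM_{β'}[R_a]; in particular a₁ remains the strictly optimal action on this range of risk parameters. -/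
open MeasureTheory

/-- Key analytic lemma for Hoeffding: `log(1 - p + p e^h) ≤ p h + h²/8`. -/
lemma hoeffding_key (p : ℝ) (hp0 : 0 ≤ p) (hp1 : p ≤ 1) (h : ℝ) :
    Real.log (1 - p + p * Real.exp h) ≤ p * h + h ^ 2 / 8 := by
  set u : ℝ → ℝ := fun x => 1 - p + p * Real.exp x with hu_def
  have hupos : ∀ x, 0 < u x := by
    intro x
    rcases eq_or_lt_of_le hp0 with h0 | h0
    · simp [hu_def, ← h0]
    · have := Real.exp_pos x
      simp only [hu_def]
      nlinarith
  have huderiv : ∀ x, HasDerivAt u (p * Real.exp x) x := by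
    intro x
    exact ((Real.hasDerivAt_exp x).const_mul p).const_add (1 - p)
  set f : ℝ → ℝ := fun x => p * x + x ^ 2 / 8 - Real.log (u x) with hf_def
  set f' : ℝ → ℝ := fun x => p + x / 4 - p * Real.exp x / u x with hf'_def
  have hfderiv : ∀ x, HasDerivAt f (f' x) x := by
    intro x
    have h1 : HasDerivAt (fun y : ℝ => p * y + y ^ 2 / 8) (p + x / 4) x := by
      have ha := (hasDerivAt_id x).const_mul p
      have hb := (hasDerivAt_pow 2 x).div_const 8
      have := ha.add hb
      refine this.congr_deriv ?_
      ring
    have h2 : HasDerivAt (fun y : ℝ => Real.log (u y)) (p * Real.exp x / u x) x :=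
      (huderiv x).log (hupos x).ne'
    exact h1.sub h2
  have hf'deriv : ∀ x, HasDerivAt f' (1 / 4 - p * Real.exp x * (1 - p) / (u x) ^ 2) x := by
    intro x
    have h1 : HasDerivAt (fun y : ℝ => p + y / 4) (1 / 4) x := by
      simpa using ((hasDerivAt_id x).div_const 4).const_add p
    have h2 : HasDerivAt (fun y : ℝ => p * Real.exp y / u y)
        ((p * Real.exp x * u x - p * Real.exp x * (p * Real.exp x)) / (u x) ^ 2) x :=
      ((Real.hasDerivAt_exp x).const_mul p).div (huderiv x) (hupos x).ne'
    have := h1.sub h2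
    refine this.congr_deriv ?_
    have hux : u x = 1 - p + p * Real.exp x := rfl
    rw [hux]
    ring
  have hf''nonneg : ∀ x, 0 ≤ 1 / 4 - p * Real.exp x * (1 - p) / (u x) ^ 2 := by
    intro x
    rw [sub_nonneg, div_le_iff₀ (pow_pos (hupos x) 2)]
    have hux : u x = 1 - p + p * Real.exp x := rfl
    rw [hux]
    nlinarith [sq_nonneg ((1 - p) - p * Real.exp x), Real.exp_pos x]
  have hmono : Monotone f' :=
    monotone_of_deriv_nonneg (fun x => (hf'deriv x).differentiableAt)
      (fun x => by rw [(hf'deriv x).deriv]; exact hf''nonneg x)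
  have hf'0 : f' 0 = 0 := by
    simp [hf'_def, hu_def]
  have hf0 : f 0 = 0 := by
    simp [hf_def, hu_def]
  have hfnonneg : ∀ x, 0 ≤ f x := by
    intro x
    rcases le_total 0 x with hx | hx
    · have hm : MonotoneOn f (Set.Ici 0) := by
        apply monotoneOn_of_deriv_nonneg (convex_Ici 0)
        · exact fun y _ => ((hfderiv y).differentiableAt).continuousAt.continuousWithinAt
        · exact fun y _ => (hfderiv y).differentiableAt.differentiableWithinAt
        · intro y hy
          rw [(hfderiv y).deriv]
          rw [interior_Ici] at hy
          have : (0 : ℝ) ≤ y := le_of_lt hy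
          calc (0:ℝ) = f' 0 := hf'0.symm
            _ ≤ f' y := hmono this
      have := hm (Set.self_mem_Ici) (Set.mem_Ici.2 hx) hx
      rwa [hf0] at this
    · have hm : AntitoneOn f (Set.Iic 0) := by
        apply antitoneOn_of_deriv_nonpos (convex_Iic 0)
        · exact fun y _ => ((hfderiv y).differentiableAt).continuousAt.continuousWithinAt
        · exact fun y _ => (hfderiv y).differentiableAt.differentiableWithinAt
        · intro y hy
          rw [(hfderiv y).deriv]
          rw [interior_Iic] at hy
          have : y ≤ (0 : ℝ) := le_of_lt hy
          calc f' y ≤ f' 0 := hmono this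
            _ = 0 := hf'0
      have := hm (Set.mem_Iic.2 hx) (Set.self_mem_Iic) hx
      rwa [hf0] at this
  have := hfnonneg h
  simp only [hf_def, hu_def] at this
  linarith

lemma hoeffding_ineq {Ω : Type*} [MeasurableSpace Ω] (μ : Measure Ω) [IsProbabilityMeasure μ]
    (X : Ω → ℝ) (hX : Measurable X) (a b t : ℝ) (hab : a < b)
    (hbdd : ∀ᵐ ω ∂μ, X ω ∈ Set.Icc a b) :
    ∫ ω, Real.exp (t * X ω) ∂μ ≤
      Real.exp (t * (∫ ω, X ω ∂μ) + t ^ 2 * (b - a) ^ 2 / 8) := by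
  have hba : (0:ℝ) < b - a := sub_pos.2 hab
  have hXint : Integrable X μ := by
    apply Integrable.mono' (integrable_const (max |a| |b|)) hX.aestronglyMeasurable
    filter_upwards [hbdd] with ω hω
    exact abs_le_max_abs_abs hω.1 hω.2
  have hexp_int : Integrable (fun ω => Real.exp (t * X ω)) μ := by
    apply Integrable.mono' (integrable_const (max (Real.exp (t*a)) (Real.exp (t*b))))
      (hX.const_mul t).exp.aestronglyMeasurable
    filter_upwards [hbdd] with ω hω
    rw [Real.norm_eq_abs, abs_of_pos (Real.exp_pos _)]
    rcases le_or_gt 0 t with ht | ht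
    · exact le_max_of_le_right (Real.exp_le_exp.2 (mul_le_mul_of_nonneg_left hω.2 ht))
    · exact le_max_of_le_left (Real.exp_le_exp.2 (by nlinarith [hω.1]))
  set m : ℝ := ∫ ω, X ω ∂μ with hm_def
  have hma : a ≤ m := by
    have h1 : ∫ _ : Ω, a ∂μ ≤ ∫ ω, X ω ∂μ :=
      integral_mono_ae (integrable_const a) hXint (hbdd.mono fun ω hω => hω.1)
    simpa using h1
  have hmb : m ≤ b := by
    have h1 : ∫ ω, X ω ∂μ ≤ ∫ _ : Ω, b ∂μ :=
      integral_mono_ae hXint (integrable_const b) (hbdd.mono fun ω hω => hω.2)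
    simpa using h1
  set c₁ : ℝ := (Real.exp (t*b) - Real.exp (t*a)) / (b - a) with hc₁
  set c₂ : ℝ := (b * Real.exp (t*a) - a * Real.exp (t*b)) / (b - a) with hc₂
  have hpt : ∀ᵐ ω ∂μ, Real.exp (t * X ω) ≤ c₁ * X ω + c₂ := by
    filter_upwards [hbdd] with ω hω
    set θ : ℝ := (b - X ω) / (b - a) with hθdef
    set η : ℝ := (X ω - a) / (b - a) with hηdef
    have hθ : 0 ≤ θ := div_nonneg (by linarith [hω.2]) hba.le
    have hη : 0 ≤ η := div_nonneg (by linarith [hω.1]) hba.le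
    have hsum : θ + η = 1 := by
      rw [hθdef, hηdef]
      field_simp
      ring
    have hconv := convexOn_exp.2 (Set.mem_univ (t*a)) (Set.mem_univ (t*b)) hθ hη hsum
    simp only [smul_eq_mul] at hconv
    have harg : θ * (t*a) + η * (t*b) = t * X ω := by
      rw [hθdef, hηdef]
      field_simp
      ring
    rw [harg] at hconv
    refine hconv.trans_eq ?_
    rw [hθdef, hηdef, hc₁, hc₂]
    field_simp
    ring
  have hint2 : Integrable (fun ω => c₁ * X ω + c₂) μ :=
    (hXint.const_mul c₁).add (integrable_const c₂)
  have hstep : ∫ ω, Real.exp (t * X ω) ∂μ ≤ c₁ * m + c₂ := by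
    have := integral_mono_ae hexp_int hint2 hpt
    rwa [integral_add (hXint.const_mul c₁) (integrable_const c₂), integral_const_mul,
      integral_const, probReal_univ, one_smul] at this
  refine hstep.trans ?_
  set p : ℝ := (m - a) / (b - a) with hp_def
  have hp0 : 0 ≤ p := div_nonneg (by linarith) hba.le
  have hp1 : p ≤ 1 := (div_le_one hba).2 (by linarith)
  set h : ℝ := t * (b - a) with hh_def
  have hk := hoeffding_key p hp0 hp1 h
  have hv : 0 < 1 - p + p * Real.exp h := by
    rcases eq_or_lt_of_le hp1 with h0 | h0
    · rw [h0]; simpa using Real.exp_pos h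
    · nlinarith [Real.exp_pos h, mul_nonneg hp0 (Real.exp_pos h).le]
  have key2 : c₁ * m + c₂ = Real.exp (t*a) * (1 - p + p * Real.exp h) := by
    rw [hc₁, hc₂, hp_def, hh_def, show t * b = t * a + t * (b - a) by ring, Real.exp_add]
    field_simp
    ring
  rw [key2]
  calc Real.exp (t*a) * (1 - p + p * Real.exp h)
      = Real.exp (t*a) * Real.exp (Real.log (1 - p + p * Real.exp h)) := by
        rw [Real.exp_log hv]
    _ ≤ Real.exp (t*a) * Real.exp (p * h + h ^ 2 / 8) := by
        exact mul_le_mul_of_nonneg_left (Real.exp_le_exp.2 hk) (Real.exp_pos _).le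
    _ = Real.exp (t*a + (p * h + h ^ 2 / 8)) := (Real.exp_add _ _).symm
    _ = Real.exp (t * m + t ^ 2 * (b - a) ^ 2 / 8) := by
        congr 1
        rw [hp_def, hh_def]
        field_simp
        ring

lemma exp_integrable {Ω : Type*} [MeasurableSpace Ω] (μ : Measure Ω) [IsProbabilityMeasure μ]
    (X : Ω → ℝ) (hX : Measurable X) (a b t : ℝ)
    (hbdd : ∀ᵐ ω ∂μ, X ω ∈ Set.Icc a b) :
    Integrable (fun ω => Real.exp (t * X ω)) μ := by
  apply Integrable.mono' (integrable_const (max (Real.exp (t*a)) (Real.exp (t*b))))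
    (hX.const_mul t).exp.aestronglyMeasurable
  filter_upwards [hbdd] with ω hω
  rw [Real.norm_eq_abs, abs_of_pos (Real.exp_pos _)]
  rcases le_or_gt 0 t with ht | ht
  · exact le_max_of_le_right (Real.exp_le_exp.2 (mul_le_mul_of_nonneg_left hω.2 ht))
  · exact le_max_of_le_left (Real.exp_le_exp.2 (by nlinarith [hω.1]))

theorem stmt_4 {Ω A : Type*} [MeasurableSpace Ω] (μ : Measure Ω) [IsProbabilityMeasure μ]
    [Fintype A] [Nontrivial A]
    (R : A → Ω → ℝ) (hmeas : ∀ a, Measurable (R a))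
    (rmin rmax : ℝ) (hlt : rmin < rmax)
    (hbdd : ∀ a, ∀ᵐ ω ∂μ, R a ω ∈ Set.Icc rmin rmax)
    (a₁ : A)
    (hopt : ∀ a ≠ a₁, ∫ ω, R a ω ∂μ < ∫ ω, R a₁ ω ∂μ)
    (E₂ ΔU : ℝ)
    (hE₂ : IsGreatest {u : ℝ | ∃ a ≠ a₁, u = ∫ ω, R a ω ∂μ} E₂)
    (hΔU : ΔU = (∫ ω, R a₁ ω ∂μ) - E₂)
    (β' : ℝ) (hβ'l : -(8 * ΔU) / (rmax - rmin) ^ 2 < β') (hβ'u : β' ≤ 0) :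
    ∀ a ≠ a₁, entRM μ β' (R a) < entRM μ β' (R a₁) := by
  intro a ha
  rcases eq_or_lt_of_le hβ'u with hβ0 | hβneg
  · subst hβ0
    simp only [entRM, if_pos rfl]
    exact hopt a ha
  · have hβne : β' ≠ 0 := hβneg.ne
    have hΔ : (0:ℝ) < rmax - rmin := sub_pos.2 hlt
    -- integrability of R a
    have hRint : ∀ c, Integrable (R c) μ := by
      intro c
      apply Integrable.mono' (integrable_const (max |rmin| |rmax|))
        (hmeas c).aestronglyMeasurable
      filter_upwards [hbdd c] with ω hω
      exact abs_le_max_abs_abs hω.1 hω.2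
    have hexpint : ∀ c, Integrable (fun ω => Real.exp (β' * R c ω)) μ :=
      fun c => exp_integrable μ (R c) (hmeas c) rmin rmax β' (hbdd c)
    have hpos : ∀ c, (0:ℝ) < ∫ ω, Real.exp (β' * R c ω) ∂μ := by
      intro c
      exact integral_exp_pos (hexpint c)
    -- upper bound for entRM of R a (Jensen)
    have hupper : entRM μ β' (R a) ≤ ∫ ω, R a ω ∂μ := by
      have hjen : Real.exp (∫ ω, β' * R a ω ∂μ) ≤ ∫ ω, Real.exp (β' * R a ω) ∂μ := by
        have := convexOn_exp.map_integral_le (μ := μ) (f := fun ω => β' * R a ω)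
          Real.continuous_exp.continuousOn isClosed_univ
          (Filter.Eventually.of_forall fun ω => Set.mem_univ _)
          ((hRint a).const_mul β') (hexpint a)
        simpa [Function.comp] using this
      rw [integral_const_mul] at hjen
      have hlog : β' * ∫ ω, R a ω ∂μ ≤ Real.log (∫ ω, Real.exp (β' * R a ω) ∂μ) :=
        (Real.le_log_iff_exp_le (hpos a)).2 hjen
      rw [entRM, if_neg hβne, one_div, inv_mul_eq_div]
      rw [div_le_iff_of_neg hβneg]
      linarith [hlog]
    -- lower bound for entRM of R a₁ (Hoeffding)
    have hlower : (∫ ω, R a₁ ω ∂μ) + β' * (rmax - rmin) ^ 2 / 8 ≤ entRM μ β' (R a₁) := by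
      have hhoef := hoeffding_ineq μ (R a₁) (hmeas a₁) rmin rmax β' hlt (hbdd a₁)
      have hlog : Real.log (∫ ω, Real.exp (β' * R a₁ ω) ∂μ) ≤
          β' * (∫ ω, R a₁ ω ∂μ) + β' ^ 2 * (rmax - rmin) ^ 2 / 8 :=
        (Real.log_le_iff_le_exp (hpos a₁)).2 hhoef
      rw [entRM, if_neg hβne, one_div, inv_mul_eq_div]
      rw [le_div_iff_of_neg hβneg]
      nlinarith [hlog]
    -- middle inequalities
    have hEa : (∫ ω, R a ω ∂μ) ≤ E₂ := hE₂.2 ⟨a, ha, rfl⟩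
    have hβΔ : -(8 * ΔU) < β' * (rmax - rmin) ^ 2 := by
      have := (div_lt_iff₀ (pow_pos hΔ 2)).1 hβ'l
      linarith
    have hmid : E₂ < (∫ ω, R a₁ ω ∂μ) + β' * (rmax - rmin) ^ 2 / 8 := by
      rw [hΔU] at hβΔ
      linarith
    calc entRM μ β' (R a) ≤ ∫ ω, R a ω ∂μ := hupper
      _ ≤ E₂ := hEa
      _ < (∫ ω, R a₁ ω ∂μ) + β' * (rmax - rmin) ^ 2 / 8 := hmid
      _ ≤ entRM μ β' (R a₁) := hlower
end

section
/- Let x_1 < x_2 < ⋯ < x_n be real numbers and let μ = (μ_1,…,μ_n) and ν = (ν_1,…,ν_n) be two probability vectors with μ ≠ ν. Then the set {β ∈ ℝ : EntRM_β(μ) = EntRM_β(ν)} has at most n − 1 elements. -/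
/-- Entropic risk measure of the distribution placing mass `μ i` on values `x i`. -/
noncomputable def entRMvec (n : ℕ) (x μ : Fin n → ℝ) (β : ℝ) : ℝ :=
  if β = 0 then ∑ i, μ i * x i
  else (1 / β) * Real.log (∑ i, μ i * Real.exp (β * x i))

open Real Finset in
lemma rolle_count {g g' : ℝ → ℝ} (hg : ∀ β, HasDerivAt g (g' β) β)
    {Z : Set ℝ} (hZ : {β : ℝ | g' β = 0} ⊆ Z) (hZf : Z.Finite)
    (T : Finset ℝ) (hT : ∀ β ∈ T, g β = 0) : T.card ≤ Z.ncard + 1 := by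
  rcases Nat.eq_zero_or_pos T.card with h0 | hpos
  · omega
  set m := T.card with hm
  have mono : Fin m ≃o T := T.orderIsoOfFin rfl
  have gcont : Continuous g := Differentiable.continuous (fun β => (hg β).differentiableAt)
  have key : ∀ i : Fin (m - 1), ∃ ξ : ℝ,
      (mono ⟨i, by omega⟩ : ℝ) < ξ ∧ ξ < (mono ⟨i+1, by omega⟩ : ℝ) ∧ g' ξ = 0 := by
    intro i
    have hab : (mono ⟨i.1, by omega⟩ : ℝ) < (mono ⟨i.1+1, by omega⟩ : ℝ) := by
      have := mono.strictMono (show (⟨i.1, by omega⟩ : Fin m) < ⟨i.1+1, by omega⟩ from by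
        simp [Fin.lt_def])
      exact_mod_cast this
    have hga : g (mono ⟨i.1, by omega⟩ : ℝ) = 0 := hT _ (mono ⟨i.1, by omega⟩).2
    have hgb : g (mono ⟨i.1+1, by omega⟩ : ℝ) = 0 := hT _ (mono ⟨i.1+1, by omega⟩).2
    obtain ⟨ξ, hξmem, hξ0⟩ := exists_hasDerivAt_eq_zero hab gcont.continuousOn
      (hga.trans hgb.symm) (fun x _ => hg x)
    exact ⟨ξ, hξmem.1, hξmem.2, hξ0⟩
  choose ξ h1 h2 h3 using key
  have hmono : StrictMono ξ := by
    intro i j hij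
    calc ξ i < (mono ⟨i.1+1, by omega⟩ : ℝ) := h2 i
      _ ≤ (mono ⟨j.1, by omega⟩ : ℝ) := by
          have : (⟨i.1+1, by omega⟩ : Fin m) ≤ ⟨j.1, by omega⟩ := by
            simp [Fin.le_def]; omega
          exact_mod_cast mono.monotone this
      _ < ξ j := h1 j
  have hsub : ∀ i, ξ i ∈ hZf.toFinset := fun i => hZf.mem_toFinset.mpr (hZ (h3 i))
  have hcard : m - 1 ≤ hZf.toFinset.card := by
    have := Finset.card_le_card_of_injOn (s := Finset.univ) ξ (fun i _ => hsub i)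
      (fun a _ b _ h => hmono.injective h)
    simpa using this
  have : Z.ncard = hZf.toFinset.card := Set.ncard_eq_toFinset_card Z hZf
  omega

open Real Finset in
lemma finset_bound_to_set {S : Set ℝ} {k : ℕ}
    (h : ∀ T : Finset ℝ, ↑T ⊆ S → T.card ≤ k) : S.Finite ∧ S.ncard ≤ k := by
  have hfin : S.Finite := by
    by_contra hinf
    obtain ⟨T, hTs, hTc⟩ := (Set.Infinite.exists_subset_card_eq hinf (k+1))
    have := h T hTs
    omega
  refine ⟨hfin, ?_⟩
  rw [Set.ncard_eq_toFinset_card S hfin]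
  exact h _ (by simp)

open Real Finset in
lemma exp_poly_zeros : ∀ (n : ℕ) (x c : Fin n → ℝ), StrictMono x → c ≠ 0 →
    {β : ℝ | ∑ i, c i * Real.exp (β * x i) = 0}.Finite ∧
    {β : ℝ | ∑ i, c i * Real.exp (β * x i) = 0}.ncard ≤ n - 1 := by
  intro n
  induction n with
  | zero => exact fun x c _ hc => absurd (Subsingleton.elim c 0) hc
  | succ n IH =>
    intro x c hx hc
    set S := {β : ℝ | ∑ i, c i * Real.exp (β * x i) = 0} with hS
    by_cases hall : ∀ i : Fin n, c i.castSucc = 0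
    · -- only the last coefficient can be nonzero; S is empty
      have hlast : c (Fin.last n) ≠ 0 := by
        intro h0
        apply hc
        funext i
        rcases Fin.lastCases (motive := fun i => c i = 0) h0 (fun j => hall j) i with h
        exact h
      have hSe : S = ∅ := by
        ext β
        simp only [hS, Set.mem_setOf_eq, Set.mem_empty_iff_false, iff_false]
        rw [Fin.sum_univ_castSucc]
        intro h
        simp only [hall, zero_mul, Finset.sum_const_zero, zero_add] at h
        have := Real.exp_pos (β * x (Fin.last n))
        rcases mul_eq_zero.mp h with h | h
        · exact hlast h
        · linarith
      rw [hSe]; simp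
    · push_neg at hall
      obtain ⟨i₀, hi₀⟩ := hall
      have hn1 : 1 ≤ n := i₀.pos
      -- shifted exponents
      set d : Fin (n+1) → ℝ := fun i => x i - x (Fin.last n) with hd
      set g : ℝ → ℝ := fun β => ∑ i, c i * Real.exp (β * d i) with hg
      set g' : ℝ → ℝ := fun β => ∑ i : Fin n,
        (c i.castSucc * d i.castSucc) * Real.exp (β * d i.castSucc) with hg'
      have hderiv : ∀ β, HasDerivAt g (g' β) β := by
        intro β
        have hterm : ∀ i : Fin (n+1), HasDerivAt (fun β => c i * Real.exp (β * d i))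
            (c i * d i * Real.exp (β * d i)) β := by
          intro i
          have h1 : HasDerivAt (fun β : ℝ => β * d i) (d i) β := by
            simpa using (hasDerivAt_id β).mul_const (d i)
          have h2 := h1.exp
          have := h2.const_mul (c i)
          exact this.congr_deriv (by ring)
        have hsum := HasDerivAt.fun_sum (fun i (_ : i ∈ Finset.univ) => hterm i)
        refine hsum.congr_deriv ?_
        symm
        rw [hg', Fin.sum_univ_castSucc]
        have : d (Fin.last n) = 0 := by simp [hd]
        simp [this]
      -- derivative's zero set via IH
      have hx' : StrictMono (fun i : Fin n => d i.castSucc) := by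
        intro a b hab
        simp only [hd]
        exact sub_lt_sub_right (hx (by exact Fin.castSucc_lt_castSucc_iff.mpr hab)) _
      have hc' : (fun i : Fin n => c i.castSucc * d i.castSucc) ≠ 0 := by
        intro h0
        have := congrFun h0 i₀
        simp only [Pi.zero_apply] at this
        have hdne : d i₀.castSucc ≠ 0 := by
          have : x i₀.castSucc < x (Fin.last n) := hx (Fin.castSucc_lt_last i₀)
          simp only [hd]; linarith
        rcases mul_eq_zero.mp this with h | h
        · exact hi₀ h
        · exact hdne h
      obtain ⟨hZfin, hZcard⟩ := IH (fun i : Fin n => d i.castSucc)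
        (fun i : Fin n => c i.castSucc * d i.castSucc) hx' hc'
      have hZeq : {β : ℝ | g' β = 0} =
          {β : ℝ | ∑ i : Fin n, (c i.castSucc * d i.castSucc) *
            Real.exp (β * d i.castSucc) = 0} := rfl
      -- S ⊆ zeros of g
      have hSsub : ∀ β ∈ S, g β = 0 := by
        intro β hβ
        have hβ' : ∑ i, c i * Real.exp (β * x i) = 0 := hβ
        have : g β = (∑ i, c i * Real.exp (β * x i)) * Real.exp (-(β * x (Fin.last n))) := by
          simp only [hg, Finset.sum_mul]
          refine Finset.sum_congr rfl fun i _ => ?_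
          rw [mul_assoc, ← Real.exp_add]
          congr 2
          simp only [hd]
          ring
        rw [this, hβ', zero_mul]
      -- bound on finsets
      have Tbound : ∀ T : Finset ℝ, ↑T ⊆ S → T.card ≤ n := by
        intro T hT
        have := rolle_count hderiv hZeq.subset hZfin T (fun β hβ => hSsub β (hT hβ))
        omega
      have := finset_bound_to_set Tbound
      exact ⟨this.1, by omega⟩

open Real Finset in
theorem stmt_5 (n : ℕ) (x : Fin n → ℝ) (hx : StrictMono x)
    (μ ν : Fin n → ℝ)
    (hμ : ∀ i, 0 ≤ μ i) (hμs : ∑ i, μ i = 1)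
    (hν : ∀ i, 0 ≤ ν i) (hνs : ∑ i, ν i = 1)
    (hne : μ ≠ ν) :
    {β : ℝ | entRMvec n x μ β = entRMvec n x ν β}.Finite ∧
    {β : ℝ | entRMvec n x μ β = entRMvec n x ν β}.ncard ≤ n - 1 := by
  set c : Fin n → ℝ := fun i => μ i - ν i with hcdef
  have hc : c ≠ 0 := by
    intro h0
    apply hne
    funext i
    have := congrFun h0 i
    simp only [hcdef, Pi.zero_apply] at this
    linarith
  obtain ⟨hZfin, hZcard⟩ := exp_poly_zeros n x c hx hc
  -- positivity of the partition sums
  have hpos : ∀ (w : Fin n → ℝ), (∀ i, 0 ≤ w i) → (∑ i, w i = 1) → ∀ β : ℝ,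
      0 < ∑ i, w i * Real.exp (β * x i) := by
    intro w hw hws β
    have hne' : ∃ i ∈ Finset.univ (α := Fin n), 0 < w i * Real.exp (β * x i) := by
      by_contra hno
      push_neg at hno
      have : ∀ i, w i = 0 := by
        intro i
        have h1 := hno i (Finset.mem_univ i)
        have h2 := Real.exp_pos (β * x i)
        nlinarith [hw i]
      simp [this] at hws
    exact Finset.sum_pos' (fun i _ => mul_nonneg (hw i) (Real.exp_pos _).le) hne'
  have hsub : {β : ℝ | entRMvec n x μ β = entRMvec n x ν β} ⊆
      {β : ℝ | ∑ i, c i * Real.exp (β * x i) = 0} := by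
    intro β hβ
    simp only [Set.mem_setOf_eq] at hβ ⊢
    have hsplit : ∑ i, c i * Real.exp (β * x i)
        = (∑ i, μ i * Real.exp (β * x i)) - (∑ i, ν i * Real.exp (β * x i)) := by
      rw [← Finset.sum_sub_distrib]
      exact Finset.sum_congr rfl fun i _ => by simp only [hcdef]; ring
    by_cases hβ0 : β = 0
    · subst hβ0
      rw [hsplit]
      simp [hμs, hνs]
    · rw [entRMvec, entRMvec, if_neg hβ0, if_neg hβ0] at hβ
      have hβne : (1 : ℝ) / β ≠ 0 := one_div_ne_zero hβ0
      have hlog := mul_left_cancel₀ hβne hβ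
      have hA := hpos μ hμ hμs β
      have hB := hpos ν hν hνs β
      have : ∑ i, μ i * Real.exp (β * x i) = ∑ i, ν i * Real.exp (β * x i) := by
        have := congrArg Real.exp hlog
        rwa [Real.exp_log hA, Real.exp_log hB] at this
      rw [hsplit, this, sub_self]
  exact ⟨hZfin.subset hsub, le_trans (Set.ncard_le_ncard hsub hZfin) hZcard⟩
end

section
/- Let n ≥ 1, let k_1,…,k_n be pairwise distinct positive real numbers, and let b_1,…,b_n be real numbers that are not all zero. Then the set of real zeros {x ∈ ℝ : ∑_{i=1}^n b_i·k_i^x = 0} has at most n − 1 elements. -/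
open Real Set

-- Lemma: if between any two points of S there is a point of finite T,
-- then S is finite with |S| ≤ |T| + 1.
lemma between_bound {S T : Set ℝ} (hT : T.Finite)
    (h : ∀ x ∈ S, ∀ y ∈ S, x < y → ∃ t ∈ T, x < t ∧ t < y) :
    S.Finite ∧ S.ncard ≤ T.ncard + 1 := by
  have key : ∀ F : Finset ℝ, ↑F ⊆ S → F.card ≤ T.ncard + 1 := by
    intro F hFS
    by_cases hF2 : F.card ≤ 1
    · omega
    push_neg at hF2
    set e := F.orderIsoOfFin rfl with he
    have hsel : ∀ i : Fin (F.card - 1), ∃ t ∈ T,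
        (e ⟨i.1, by omega⟩ : ℝ) < t ∧ t < (e ⟨i.1 + 1, by omega⟩ : ℝ) := by
      intro i
      apply h _ (hFS (e ⟨i.1, by omega⟩).2) _ (hFS (e ⟨i.1 + 1, by omega⟩).2)
      have hlt : (⟨i.1, by omega⟩ : Fin F.card) < ⟨i.1 + 1, by omega⟩ := by
        simp [Fin.lt_def]
      exact_mod_cast e.strictMono hlt
    choose φ hφT hφl hφr using hsel
    have hmono : StrictMono φ := by
      intro i j hij
      calc φ i < (e ⟨i.1 + 1, by omega⟩ : ℝ) := hφr i
        _ ≤ (e ⟨j.1, by omega⟩ : ℝ) := by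
            have hv : i.1 < j.1 := hij
            have hle : (⟨i.1 + 1, by omega⟩ : Fin F.card) ≤ ⟨j.1, by omega⟩ := by
              simp only [Fin.le_def]; omega
            exact_mod_cast e.monotone hle
        _ < φ j := hφl j
    have hcard : (Finset.univ : Finset (Fin (F.card - 1))).card ≤ hT.toFinset.card := by
      apply Finset.card_le_card_of_injOn φ
      · intro i _; simpa using hφT i
      · exact (hmono.injective).injOn
    simp only [Finset.card_univ, Fintype.card_fin] at hcard
    rw [Set.ncard_eq_toFinset_card _ hT]
    omega
  have hSfin : S.Finite := by
    by_contra hinf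
    have hinf' : S.Infinite := hinf
    obtain ⟨F, hFS, hFcard⟩ := hinf'.exists_subset_card_eq (T.ncard + 2)
    have := key F hFS
    omega
  refine ⟨hSfin, ?_⟩
  rw [Set.ncard_eq_toFinset_card _ hSfin]
  exact key hSfin.toFinset (by simp)

lemma main_lemma : ∀ n (k b : Fin (n + 1) → ℝ), (∀ i, 0 < k i) → Function.Injective k →
    (∃ i, b i ≠ 0) →
    {x : ℝ | ∑ i, b i * k i ^ x = 0}.Finite ∧
    {x : ℝ | ∑ i, b i * k i ^ x = 0}.ncard ≤ n := by
  intro n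
  induction n with
  | zero =>
    intro k b hk hkdist hb
    obtain ⟨i, hi⟩ := hb
    have hi0 : b 0 ≠ 0 := by rwa [Fin.fin_one_eq_zero i] at hi
    have : {x : ℝ | ∑ i, b i * k i ^ x = 0} = ∅ := by
      ext x
      simp only [mem_setOf_eq, mem_empty_iff_false, iff_false, Fin.sum_univ_succ,
        Finset.univ_eq_empty, Finset.sum_empty, add_zero]
      exact mul_ne_zero hi0 (Real.rpow_pos_of_pos (hk 0) x).ne'
    rw [this]
    simp
  | succ n IH =>
    intro k b hk hkdist hb
    by_cases hall : ∀ i, b i ≠ 0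
    · -- all coefficients nonzero
      set r : Fin (n + 2) → ℝ := fun i => k i / k 0 with hrdef
      have hr : ∀ i, 0 < r i := fun i => div_pos (hk i) (hk 0)
      set g : ℝ → ℝ := fun x => ∑ i, b i * r i ^ x with hgdef
      have hfg : ∀ x, (∑ i, b i * k i ^ x) = k 0 ^ x * g x := by
        intro x
        rw [hgdef, Finset.mul_sum]
        apply Finset.sum_congr rfl
        intro i _
        have : k i = r i * k 0 := (div_mul_cancel₀ (k i) (hk 0).ne').symm
        rw [this, Real.mul_rpow (hr i).le (hk 0).le]
        ring
      have hset : {x : ℝ | ∑ i, b i * k i ^ x = 0} = {x : ℝ | g x = 0} := by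
        ext x
        simp only [mem_setOf_eq, hfg x]
        constructor
        · intro h
          rcases mul_eq_zero.mp h with h | h
          · exact absurd h (Real.rpow_pos_of_pos (hk 0) x).ne'
          · exact h
        · intro h; rw [h, mul_zero]
      set c : Fin (n + 1) → ℝ := fun i => b i.succ * Real.log (r i.succ) with hcdef
      set rb : Fin (n + 1) → ℝ := fun i => r i.succ with hrbdef
      have hderiv : ∀ x : ℝ, HasDerivAt g (∑ i : Fin (n + 1), c i * rb i ^ x) x := by
        intro x
        have h1 : HasDerivAt g (∑ i : Fin (n + 2), b i * (r i ^ x * Real.log (r i))) x := by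
          apply HasDerivAt.fun_sum
          intro i _
          exact ((Real.hasStrictDerivAt_const_rpow (hr i) x).hasDerivAt).const_mul (b i)
        convert h1 using 1
        rw [Fin.sum_univ_succ (f := fun i : Fin (n + 2) => b i * (r i ^ x * Real.log (r i)))]
        have hr0 : r 0 = 1 := div_self (hk 0).ne'
        rw [hr0]
        simp only [Real.log_one, mul_zero, zero_add]
        apply Finset.sum_congr rfl
        intro i _
        simp only [hcdef, hrbdef]
        ring
      have hrbinj : Function.Injective rb := by
        intro i j hij
        have : k i.succ = k j.succ := by
          have := hij
          simp only [hrbdef, hrdef] at this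
          rw [div_eq_div_iff (hk 0).ne' (hk 0).ne'] at this
          exact mul_right_cancel₀ (hk 0).ne' this
        exact Fin.succ_injective _ (hkdist this)
      have hcne : ∀ i, c i ≠ 0 := by
        intro i
        apply mul_ne_zero (hall _)
        apply Real.log_ne_zero_of_pos_of_ne_one (hr _)
        intro h1
        have : k i.succ = k 0 := by
          have := h1
          simp only [hrdef, div_eq_one_iff_eq (hk 0).ne'] at this
          exact this
        exact Fin.succ_ne_zero i (hkdist this)
      obtain ⟨hTfin, hTcard⟩ := IH rb c (fun i => hr _) hrbinj ⟨0, hcne 0⟩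
      set T := {x : ℝ | ∑ i, c i * rb i ^ x = 0}
      have hrolle : ∀ x ∈ {x : ℝ | g x = 0}, ∀ y ∈ {x : ℝ | g x = 0}, x < y →
          ∃ t ∈ T, x < t ∧ t < y := by
        intro x hx y hy hxy
        have hcont : ContinuousOn g (Icc x y) :=
          (fun z _ => ((hderiv z).differentiableAt.continuousAt.continuousWithinAt))
        obtain ⟨t, htmem, ht⟩ := exists_hasDerivAt_eq_zero hxy hcont
          (by rw [mem_setOf_eq.mp hx, mem_setOf_eq.mp hy]) (fun z _ => hderiv z)
        exact ⟨t, ht, htmem.1, htmem.2⟩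
      obtain ⟨hfin, hcard⟩ := between_bound hTfin hrolle
      rw [hset]
      exact ⟨hfin, by omega⟩
    · -- some coefficient is zero
      push_neg at hall
      obtain ⟨j, hj⟩ := hall
      have hsum : ∀ x : ℝ, (∑ i, b i * k i ^ x) =
          ∑ i : Fin (n + 1), b (j.succAbove i) * k (j.succAbove i) ^ x := by
        intro x
        rw [Fin.sum_univ_succAbove (fun i => b i * k i ^ x) j, hj, zero_mul, zero_add]
      have hset : {x : ℝ | ∑ i, b i * k i ^ x = 0} =
          {x : ℝ | ∑ i : Fin (n + 1), b (j.succAbove i) * k (j.succAbove i) ^ x = 0} := by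
        ext x; simp [hsum x]
      obtain ⟨i0, hi0⟩ := hb
      have hi0j : i0 ≠ j := fun h => hi0 (h ▸ hj)
      obtain ⟨i1, hi1⟩ := Fin.exists_succAbove_eq hi0j
      obtain ⟨hfin, hcard⟩ := IH (k ∘ j.succAbove) (b ∘ j.succAbove)
        (fun i => hk _) (hkdist.comp (Fin.succAbove_right_injective))
        ⟨i1, by simpa [Function.comp, hi1] using hi0⟩
      rw [hset]
      exact ⟨hfin, le_trans hcard (Nat.le_succ n)⟩

theorem stmt_6 (n : ℕ) (hn : 1 ≤ n) (k b : Fin n → ℝ)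
    (hk : ∀ i, 0 < k i) (hkdist : Function.Injective k)
    (hb : ∃ i, b i ≠ 0) :
    {x : ℝ | ∑ i, b i * k i ^ x = 0}.Finite ∧
    {x : ℝ | ∑ i, b i * k i ^ x = 0}.ncard ≤ n - 1 := by
  obtain ⟨m, rfl⟩ : ∃ m, n = m + 1 := ⟨n - 1, by omega⟩
  simpa using main_lemma m k b hk hkdist hb
end

section
/- Let x_1 < x_2 < ⋯ < x_n be real numbers and let μ^(1),…,μ^(m) be pairwise distinct probability vectors in ℝⁿ. Then the set {β ∈ ℝ : there exist i ≠ j with EntRM_β(μ^(i)) = EntRM_β(μ^(j))} has at most (n − 1)·m·(m − 1)/2 elements. -/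
open Set

lemma finiteBound (s : Set ℝ) (k : ℕ)
    (h : ∀ t : Set ℝ, t ⊆ s → t.Finite → t.ncard ≤ k) : s.Finite ∧ s.ncard ≤ k := by
  have hfin : s.Finite := by
    by_contra hinf
    have hinf' : s.Infinite := hinf
    obtain ⟨t, hts, htf, htn⟩ := hinf'.exists_subset_ncard_eq (k+1)
    have := h t hts htf
    omega
  exact ⟨hfin, h s Subset.rfl hfin⟩

lemma rolleCount (f : ℝ → ℝ) (hf : Differentiable ℝ f) (N : ℕ)
    (hT : {y : ℝ | deriv f y = 0}.Finite) (hTn : {y : ℝ | deriv f y = 0}.ncard ≤ N) :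
    {y : ℝ | f y = 0}.Finite ∧ {y : ℝ | f y = 0}.ncard ≤ N + 1 := by
  apply finiteBound
  intro t hts htf
  by_contra hlt
  push_neg at hlt
  obtain ⟨u, hut, hun⟩ := Set.exists_subset_card_eq (show N + 2 ≤ t.ncard by omega)
  have huf : u.Finite := htf.subset hut
  lift u to Finset ℝ using huf
  rw [Set.ncard_coe_finset] at hun
  set e := u.orderIsoOfFin hun with he
  have hval : ∀ i : Fin (N+2), f ((e i : ℝ)) = 0 := by
    intro i
    have : ((e i : ℝ)) ∈ (u : Set ℝ) := (e i).2
    exact hts (hut this)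
  have hmono : StrictMono (fun i : Fin (N+2) => ((e i : ℝ))) := by
    intro a b hab
    exact_mod_cast e.strictMono hab
  have key : ∀ i : Fin (N+1), ∃ c ∈ Set.Ioo ((e i.castSucc : ℝ)) ((e i.succ : ℝ)),
      deriv f c = 0 := by
    intro i
    exact exists_deriv_eq_zero (hmono (Fin.castSucc_lt_succ (i := i))) (hf.continuous.continuousOn)
      ((hval i.castSucc).trans (hval i.succ).symm)
  choose c hc hc0 using key
  have hcmono : StrictMono c := by
    rw [Fin.strictMono_iff_lt_succ]
    intro i
    calc c i.castSucc < (e i.castSucc.succ : ℝ) := (hc i.castSucc).2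
      _ = (e i.succ.castSucc : ℝ) := by rw [Fin.succ_castSucc]
      _ < c i.succ := (hc i.succ).1
  have hsub : Set.range c ⊆ {y : ℝ | deriv f y = 0} := by
    rintro _ ⟨i, rfl⟩; exact hc0 i
  have h1 : (Set.range c).ncard ≤ N := le_trans (Set.ncard_le_ncard hsub hT) hTn
  have h2 : (Set.range c).ncard = N + 1 := by
    rw [← Set.image_univ, Set.ncard_image_of_injective _ hcmono.injective]
    simp [Set.ncard_univ]
  omega

lemma expsum_hasDerivAt (s : Finset ℝ) (c w : ℝ → ℝ) (β : ℝ) :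
    HasDerivAt (fun β => ∑ a ∈ s, c a * Real.exp (w a * β))
      (∑ a ∈ s, c a * w a * Real.exp (w a * β)) β := by
  apply HasDerivAt.fun_sum
  intro a _
  have h1 : HasDerivAt (fun β : ℝ => w a * β) (w a) β := by
    simpa using (hasDerivAt_id β).const_mul (w a)
  have h2 : HasDerivAt (fun β => Real.exp (w a * β)) (Real.exp (w a * β) * w a) β :=
    (Real.hasDerivAt_exp (w a * β)).comp β h1
  have := h2.const_mul (c a)
  convert this using 1
  exacts [rfl, by ring]

lemma expsum_zeros : ∀ (N : ℕ) (s : Finset ℝ) (c : ℝ → ℝ), s.card = N → s.Nonempty →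
    (∀ a ∈ s, c a ≠ 0) →
    {β : ℝ | ∑ a ∈ s, c a * Real.exp (a * β) = 0}.Finite ∧
    {β : ℝ | ∑ a ∈ s, c a * Real.exp (a * β) = 0}.ncard ≤ N - 1 := by
  intro N
  induction N with
  | zero =>
    intro s c hcard hne _
    rw [Finset.card_eq_zero] at hcard
    subst hcard
    exact absurd hne (by simp)
  | succ N ih =>
    intro s c hcard hne hc
    by_cases hN : N = 0
    · subst hN
      obtain ⟨a, rfl⟩ := Finset.card_eq_one.mp hcard
      have : {β : ℝ | ∑ b ∈ {a}, c b * Real.exp (b * β) = 0} = ∅ := by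
        ext β
        simp only [Finset.sum_singleton, Set.mem_setOf_eq, Set.mem_empty_iff_false, iff_false]
        exact mul_ne_zero (hc a (Finset.mem_singleton_self a)) (Real.exp_ne_zero _)
      rw [this]; simp
    · -- main step
      set a₀ := s.min' hne with ha₀
      have ha₀s : a₀ ∈ s := s.min'_mem hne
      set g : ℝ → ℝ := fun β => ∑ a ∈ s, c a * Real.exp ((a - a₀) * β) with hg
      have hZeq : {β : ℝ | ∑ a ∈ s, c a * Real.exp (a * β) = 0} = {β : ℝ | g β = 0} := by
        ext β
        simp only [Set.mem_setOf_eq, hg]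
        have : ∀ a ∈ s, c a * Real.exp (a * β) = Real.exp (a₀ * β) * (c a * Real.exp ((a - a₀) * β)) := by
          intro a _
          have hab : a₀ * β + (a - a₀) * β = a * β := by ring
          rw [← hab, Real.exp_add]
          ring
        rw [Finset.sum_congr rfl this, ← Finset.mul_sum]
        constructor
        · intro h; rcases mul_eq_zero.mp h with h | h
          · exact absurd h (Real.exp_ne_zero _)
          · exact h
        · intro h; rw [h, mul_zero]
      rw [hZeq]
      -- derivative of g
      have hgd : ∀ β, HasDerivAt g (∑ a ∈ s, c a * (a - a₀) * Real.exp ((a - a₀) * β)) β :=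
        fun β => expsum_hasDerivAt s c (fun a => a - a₀) β
      have hgdiff : Differentiable ℝ g := fun β => (hgd β).differentiableAt
      set s' : Finset ℝ := (s.erase a₀).image (fun a => a - a₀) with hs'
      set c' : ℝ → ℝ := fun t => c (t + a₀) * t with hc'
      have hinj : Function.Injective (fun a : ℝ => a - a₀) := fun a b h => by
        simpa using congrArg (· + a₀) h
      have hds : ∀ β, deriv g β = ∑ t ∈ s', c' t * Real.exp (t * β) := by
        intro β
        rw [(hgd β).deriv, hs', Finset.sum_image (fun a _ b _ h => hinj h)]
        rw [← Finset.add_sum_erase s _ ha₀s]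
        simp only [sub_self, mul_zero, zero_mul, zero_add]
        apply Finset.sum_congr rfl
        intro a ha
        simp only [hc', sub_add_cancel]
      have hs'card : s'.card = N := by
        rw [hs', Finset.card_image_of_injective _ hinj, Finset.card_erase_of_mem ha₀s, hcard]
        rfl
      have hs'ne : s'.Nonempty := by
        rw [← Finset.card_pos, hs'card]
        omega
      have hc'ne : ∀ t ∈ s', c' t ≠ 0 := by
        intro t ht
        rw [hs', Finset.mem_image] at ht
        obtain ⟨a, ha, rfl⟩ := ht
        have ha' := Finset.mem_of_mem_erase ha
        have hne' : a ≠ a₀ := Finset.ne_of_mem_erase ha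
        simp only [hc', sub_add_cancel]
        exact mul_ne_zero (hc a ha') (sub_ne_zero_of_ne hne')
      obtain ⟨hfin', hcard'⟩ := ih s' c' hs'card hs'ne hc'ne
      have hset : {y : ℝ | deriv g y = 0} = {β : ℝ | ∑ t ∈ s', c' t * Real.exp (t * β) = 0} := by
        ext β; simp [hds β]
      obtain ⟨hfin, hcardg⟩ := rolleCount g hgdiff (N - 1) (hset ▸ hfin') (hset ▸ hcard')
      refine ⟨hfin, le_trans hcardg (by omega)⟩

lemma expsum_zeros_fin (n : ℕ) (x c : Fin n → ℝ) (hx : Function.Injective x)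
    (hcne : ∃ k, c k ≠ 0) :
    {β : ℝ | ∑ k, c k * Real.exp (x k * β) = 0}.Finite ∧
    {β : ℝ | ∑ k, c k * Real.exp (x k * β) = 0}.ncard ≤ n - 1 := by
  classical
  set t : Finset (Fin n) := Finset.univ.filter (fun k => c k ≠ 0) with ht
  set s : Finset ℝ := t.image x with hs
  set d : ℝ → ℝ := Function.extend x c 0 with hd
  have hsum : ∀ β, ∑ k, c k * Real.exp (x k * β) = ∑ a ∈ s, d a * Real.exp (a * β) := by
    intro β
    rw [hs, Finset.sum_image (fun a _ b _ h => hx h)]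
    rw [← Finset.sum_filter_of_ne (p := fun k => c k ≠ 0) (by intro k _ h hk; exact h (by simp [hk]))]
    apply Finset.sum_congr rfl
    intro k _
    rw [hd, hx.extend_apply]
  have hset : {β : ℝ | ∑ k, c k * Real.exp (x k * β) = 0}
      = {β : ℝ | ∑ a ∈ s, d a * Real.exp (a * β) = 0} := by
    ext β; simp [hsum β]
  rw [hset]
  have hne : s.Nonempty := by
    obtain ⟨k, hk⟩ := hcne
    exact ⟨x k, Finset.mem_image_of_mem x (by simp [ht, hk])⟩
  have hdne : ∀ a ∈ s, d a ≠ 0 := by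
    intro a ha
    rw [hs, Finset.mem_image] at ha
    obtain ⟨k, hk, rfl⟩ := ha
    rw [hd, hx.extend_apply]
    simpa [ht] using hk
  obtain ⟨h1, h2⟩ := expsum_zeros s.card s d rfl hne hdne
  refine ⟨h1, le_trans h2 ?_⟩
  have : s.card ≤ n := le_trans Finset.card_image_le
    (le_trans (Finset.card_filter_le _ _) (by simp))
  omega

lemma biUnion_bound {ι : Type*} [DecidableEq ι] (P : Finset ι) (f : ι → Set ℝ) (K : ℕ)
    (h : ∀ p ∈ P, (f p).Finite ∧ (f p).ncard ≤ K) :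
    (⋃ p ∈ P, f p).Finite ∧ (⋃ p ∈ P, f p).ncard ≤ P.card * K := by
  classical
  induction P using Finset.induction with
  | empty => simp
  | @insert a P ha ih =>
    rw [Finset.set_biUnion_insert]
    obtain ⟨h1, h2⟩ := ih (fun p hp => h p (Finset.mem_insert_of_mem hp))
    obtain ⟨h3, h4⟩ := h a (Finset.mem_insert_self a P)
    refine ⟨h3.union h1, ?_⟩
    calc (f a ∪ ⋃ p ∈ P, f p).ncard ≤ (f a).ncard + (⋃ p ∈ P, f p).ncard :=
          Set.ncard_union_le _ _
      _ ≤ K + P.card * K := add_le_add h4 h2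
      _ = (insert a P).card * K := by rw [Finset.card_insert_of_notMem ha]; ring

lemma pairs_card (m : ℕ) :
    ((Finset.univ : Finset (Fin m × Fin m)).filter (fun p => p.1 < p.2)).card * 2
      ≤ m * (m - 1) := by
  classical
  set P := (Finset.univ : Finset (Fin m × Fin m)).filter (fun p => p.1 < p.2) with hP
  set P' := (Finset.univ : Finset (Fin m × Fin m)).filter (fun p => p.2 < p.1) with hP'
  have hswap : P' = P.image Prod.swap := by
    ext p
    simp only [hP, hP', Finset.mem_filter, Finset.mem_image, Finset.mem_univ, true_and]
    constructor
    · intro h; exact ⟨p.swap, h, by simp⟩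
    · rintro ⟨q, hq, rfl⟩; exact hq
  have hcard' : P'.card = P.card := by
    rw [hswap, Finset.card_image_of_injective _ Prod.swap_injective]
  have hdisj : Disjoint P P' := by
    rw [Finset.disjoint_left]
    intro p hp hp'
    rw [hP, Finset.mem_filter] at hp
    rw [hP', Finset.mem_filter] at hp'
    exact absurd hp'.2 (not_lt_of_gt hp.2)
  have hsub : P ∪ P' ⊆ (Finset.univ : Finset (Fin m)).offDiag := by
    intro p hp
    rw [Finset.mem_offDiag]
    refine ⟨Finset.mem_univ _, Finset.mem_univ _, ?_⟩
    rcases Finset.mem_union.mp hp with h | h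
    · exact ne_of_lt (Finset.mem_filter.mp h).2
    · exact ne_of_gt (Finset.mem_filter.mp h).2
  have := Finset.card_le_card hsub
  rw [Finset.card_union_of_disjoint hdisj, hcard', Finset.offDiag_card] at this
  simp only [Finset.card_univ, Fintype.card_fin] at this
  have hmm : m * m - m = m * (m - 1) := by
    cases m with
    | zero => simp
    | succ k => simp [Nat.succ_mul, Nat.mul_succ]
  omega

theorem stmt_7 (n m : ℕ) (x : Fin n → ℝ) (hx : StrictMono x)
    (μ : Fin m → Fin n → ℝ)
    (hprob : ∀ j, (∀ i, 0 ≤ μ j i) ∧ ∑ i, μ j i = 1)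
    (hdist : Function.Injective μ) :
    {β : ℝ | ∃ i j, i ≠ j ∧ entRMvec n x (μ i) β = entRMvec n x (μ j) β}.Finite ∧
    {β : ℝ | ∃ i j, i ≠ j ∧ entRMvec n x (μ i) β = entRMvec n x (μ j) β}.ncard ≤
      (n - 1) * m * (m - 1) / 2 := by
  classical
  set S := {β : ℝ | ∃ i j, i ≠ j ∧ entRMvec n x (μ i) β = entRMvec n x (μ j) β} with hS
  set Z : Fin m → Fin m → Set ℝ :=
    fun i j => {β : ℝ | ∑ k, (μ i k - μ j k) * Real.exp (x k * β) = 0} with hZ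
  have hZbound : ∀ i j : Fin m, i ≠ j → (Z i j).Finite ∧ (Z i j).ncard ≤ n - 1 := by
    intro i j hij
    apply expsum_zeros_fin n x _ hx.injective
    by_contra h
    push_neg at h
    exact hij (hdist (funext fun k => sub_eq_zero.mp (h k)))
  have hsumsub : ∀ i j : Fin m, ∑ k, (μ i k - μ j k) = 0 := by
    intro i j
    rw [Finset.sum_sub_distrib, (hprob i).2, (hprob j).2, sub_self]
  have hpos : ∀ (i : Fin m) (β : ℝ), 0 < ∑ k, μ i k * Real.exp (β * x k) := by
    intro i β
    have h1 := (hprob i).1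
    apply Finset.sum_pos' (fun k _ => mul_nonneg (h1 k) (Real.exp_pos _).le)
    by_contra h
    push_neg at h
    have hall : ∀ k, μ i k = 0 := by
      intro k
      have := h k (Finset.mem_univ k)
      nlinarith [Real.exp_pos (β * x k), h1 k]
    have h2 := (hprob i).2
    rw [Finset.sum_congr rfl (fun k _ => hall k)] at h2
    simp at h2
  have memZ : ∀ (i j : Fin m) (β : ℝ),
      entRMvec n x (μ i) β = entRMvec n x (μ j) β → β ∈ Z i j := by
    intro i j β heq
    by_cases hβ : β = 0
    · subst hβ
      simp only [hZ, Set.mem_setOf_eq, mul_zero, Real.exp_zero, mul_one]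
      exact hsumsub i j
    · simp only [entRMvec, if_neg hβ] at heq
      have hA := hpos i β
      have hB := hpos j β
      have hlog : Real.log (∑ k, μ i k * Real.exp (β * x k))
          = Real.log (∑ k, μ j k * Real.exp (β * x k)) :=
        mul_left_cancel₀ (one_div_ne_zero hβ) heq
      have hAB : (∑ k, μ i k * Real.exp (β * x k)) = ∑ k, μ j k * Real.exp (β * x k) :=
        Real.log_injOn_pos (Set.mem_Ioi.mpr hA) (Set.mem_Ioi.mpr hB) hlog
      simp only [hZ, Set.mem_setOf_eq]
      have hterm : ∀ k : Fin n, (μ i k - μ j k) * Real.exp (x k * β)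
          = μ i k * Real.exp (β * x k) - μ j k * Real.exp (β * x k) := by
        intro k; rw [mul_comm (x k) β]; ring
      rw [Finset.sum_congr rfl (fun k _ => hterm k), Finset.sum_sub_distrib, hAB, sub_self]
  set P := (Finset.univ : Finset (Fin m × Fin m)).filter (fun p => p.1 < p.2) with hP
  have hSsub : S ⊆ ⋃ p ∈ P, Z p.1 p.2 := by
    rintro β ⟨i, j, hij, heq⟩
    rcases lt_or_gt_of_ne hij with h | h
    · exact Set.mem_iUnion₂.mpr ⟨(i, j), by simp [hP, h], memZ i j β heq⟩
    · exact Set.mem_iUnion₂.mpr ⟨(j, i), by simp [hP, h], memZ j i β heq.symm⟩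
  obtain ⟨hUf, hUcard⟩ := biUnion_bound P (fun p => Z p.1 p.2) (n - 1)
    (fun p hp => hZbound p.1 p.2 (ne_of_lt (Finset.mem_filter.mp hp).2))
  refine ⟨hUf.subset hSsub, ?_⟩
  have h1 : S.ncard ≤ P.card * (n - 1) :=
    le_trans (Set.ncard_le_ncard hSsub hUf) hUcard
  have h2 := pairs_card m
  rw [Nat.le_div_iff_mul_le two_pos]
  calc S.ncard * 2 ≤ P.card * (n - 1) * 2 := Nat.mul_le_mul_right _ h1
    _ = (n - 1) * (P.card * 2) := by ring
    _ ≤ (n - 1) * (m * (m - 1)) := Nat.mul_le_mul_left _ h2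
    _ = (n - 1) * m * (m - 1) := (mul_assoc _ _ _).symm
end

section
/- Let (Ω, 𝒫) be a probability space, H > 0, and R : Ω → ℝ a random variable with |R| ≤ H almost surely. Then for all real numbers β₁ ≤ β ≤ β₂: min(𝔼[exp(β₁·R)], 𝔼[exp(β₂·R)]) ≤ exp((β₂ − β₁)·H/2)·𝔼[exp(β·R)]. -/
open MeasureTheory

lemma exp_integrable_aux {Ω : Type*} [MeasurableSpace Ω] (μ : Measure Ω)
    [IsProbabilityMeasure μ] (R : Ω → ℝ) (hR : Measurable R) (H : ℝ)
    (hbdd : ∀ᵐ ω ∂μ, |R ω| ≤ H) (γ : ℝ) :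
    Integrable (fun ω => Real.exp (γ * R ω)) μ := by
  refine Integrable.mono' (integrable_const (Real.exp (|γ| * H)))
    ((hR.const_mul γ).exp.aestronglyMeasurable) ?_
  filter_upwards [hbdd] with ω hω
  rw [Real.norm_eq_abs, abs_of_pos (Real.exp_pos _)]
  apply Real.exp_le_exp.2
  calc γ * R ω ≤ |γ * R ω| := le_abs_self _
    _ = |γ| * |R ω| := abs_mul _ _
    _ ≤ |γ| * H := by
        exact mul_le_mul_of_nonneg_left hω (abs_nonneg _)

lemma key_aux {Ω : Type*} [MeasurableSpace Ω] (μ : Measure Ω)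
    [IsProbabilityMeasure μ] (R : Ω → ℝ) (hR : Measurable R) (H : ℝ) (hH : 0 ≤ H)
    (hbdd : ∀ᵐ ω ∂μ, |R ω| ≤ H) (γ β c : ℝ) (hc : |γ - β| ≤ c) :
    ∫ ω, Real.exp (γ * R ω) ∂μ ≤ Real.exp (c * H) * ∫ ω, Real.exp (β * R ω) ∂μ := by
  have h1 := exp_integrable_aux μ R hR H hbdd γ
  have h2 := exp_integrable_aux μ R hR H hbdd β
  calc ∫ ω, Real.exp (γ * R ω) ∂μ
      ≤ ∫ ω, Real.exp (c * H) * Real.exp (β * R ω) ∂μ := by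
        refine integral_mono_ae h1 (h2.const_mul _) ?_
        filter_upwards [hbdd] with ω hω
        rw [← Real.exp_add]
        apply Real.exp_le_exp.2
        have : γ * R ω - β * R ω ≤ c * H := by
          calc γ * R ω - β * R ω = (γ - β) * R ω := by ring
            _ ≤ |(γ - β) * R ω| := le_abs_self _
            _ = |γ - β| * |R ω| := abs_mul _ _
            _ ≤ c * H := mul_le_mul hc hω (abs_nonneg _) ((abs_nonneg _).trans hc)
        linarith
    _ = Real.exp (c * H) * ∫ ω, Real.exp (β * R ω) ∂μ := integral_const_mul _ _

theorem stmt_10 {Ω : Type*} [MeasurableSpace Ω] (μ : Measure Ω) [IsProbabilityMeasure μ]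
    (R : Ω → ℝ) (hR : Measurable R) (H : ℝ) (hH : 0 < H)
    (hbdd : ∀ᵐ ω ∂μ, |R ω| ≤ H) :
    ∀ β₁ β β₂ : ℝ, β₁ ≤ β → β ≤ β₂ →
      min (∫ ω, Real.exp (β₁ * R ω) ∂μ) (∫ ω, Real.exp (β₂ * R ω) ∂μ) ≤
        Real.exp ((β₂ - β₁) * H / 2) * ∫ ω, Real.exp (β * R ω) ∂μ := by
  intro β₁ β β₂ h1 h2
  have hc : (β₂ - β₁) * H / 2 = ((β₂ - β₁) / 2) * H := by ring
  rw [hc]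
  rcases le_or_gt (β - β₁) ((β₂ - β₁) / 2) with h | h
  · refine (min_le_left _ _).trans ?_
    exact key_aux μ R hR H hH.le hbdd β₁ β _ (by rw [abs_of_nonpos (by linarith)]; linarith)
  · refine (min_le_right _ _).trans ?_
    exact key_aux μ R hR H hH.le hbdd β₂ β _ (by rw [abs_of_nonneg (by linarith)]; linarith)
end

section
/- Let Π be a finite nonempty set, H > 0, and (R_π)_{π∈Π} real random variables on a probability space with |R_π| ≤ H almost surely for each π. Assume there exist a < 0 and p ∈ (0,1] such that 𝒫(R_π ≤ a) ≥ p for every π ∈ Π. Let ε > 0, set the grid step h = 2·log(1 + ε)/H, β_min = log(1/p)/(−a), and K = ⌈β_min/h⌉. Define B = min_{π∈Π} inf_{β ≥ 0} 𝔼[exp(−β·R_π)] and B̃ = min_{π∈Π} min_{0 ≤ k ≤ K} 𝔼[exp(−h·k·R_π)]. Then B ≤ B̃ ≤ (1 + ε)·B. -/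
open MeasureTheory

set_option maxHeartbeats 2000000 in
theorem stmt_12 {Ω P : Type*} [MeasurableSpace Ω] (μ : Measure Ω) [IsProbabilityMeasure μ]
    [Fintype P] [Nonempty P]
    (R : P → Ω → ℝ) (hmeas : ∀ π, Measurable (R π)) (H : ℝ) (hH : 0 < H)
    (hbdd : ∀ π, ∀ᵐ ω ∂μ, |R π ω| ≤ H)
    (a : ℝ) (ha : a < 0) (p : ℝ) (hp : p ∈ Set.Ioc (0 : ℝ) 1)
    (htail : ∀ π, ENNReal.ofReal p ≤ μ {ω | R π ω ≤ a})
    (ε : ℝ) (hε : 0 < ε)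
    (h βmin : ℝ) (K : ℕ)
    (hh : h = 2 * Real.log (1 + ε) / H)
    (hβmin : βmin = Real.log (1 / p) / (-a))
    (hK : K = ⌈βmin / h⌉₊)
    (B Btilde : ℝ)
    (hB : B = ⨅ π : P, ⨅ β : Set.Ici (0 : ℝ), ∫ ω, Real.exp (-(β : ℝ) * R π ω) ∂μ)
    (hBt : Btilde = ⨅ π : P, ⨅ k : Finset.range (K + 1),
      ∫ ω, Real.exp (-(h * ((k : ℕ) : ℝ)) * R π ω) ∂μ) :
    B ≤ Btilde ∧ Btilde ≤ (1 + ε) * B := by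
  obtain ⟨hp0, hp1⟩ := hp
  have hlog : 0 < Real.log (1 + ε) := Real.log_pos (by linarith)
  have hhpos : 0 < h := by rw [hh]; positivity
  -- abbreviation
  set M : P → ℝ → ℝ := fun π β => ∫ ω, Real.exp (-β * R π ω) ∂μ with hM
  -- integrability
  have hint : ∀ π β, Integrable (fun ω => Real.exp (-β * R π ω)) μ := by
    intro π β
    refine Integrable.mono' (integrable_const (Real.exp (|β| * H)))
      ((Real.measurable_exp.comp ((measurable_const.mul (hmeas π)))).aestronglyMeasurable) ?_
    filter_upwards [hbdd π] with ω hω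
    rw [Real.norm_eq_abs, abs_of_pos (Real.exp_pos _)]
    apply Real.exp_le_exp.2
    calc -β * R π ω ≤ |(-β) * R π ω| := le_abs_self _
      _ = |β| * |R π ω| := by rw [abs_mul, abs_neg]
      _ ≤ |β| * H := by
          exact mul_le_mul_of_nonneg_left hω (abs_nonneg _)
  have hMnonneg : ∀ π β, 0 ≤ M π β := fun π β =>
    integral_nonneg fun ω => (Real.exp_pos _).le
  have hM0 : ∀ π, M π 0 = 1 := by
    intro π
    simp [hM, measure_univ]
  -- shift lemma
  have hshift : ∀ (π : P) (β γ : ℝ), |γ - β| * H ≤ Real.log (1 + ε) →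
      M π γ ≤ (1 + ε) * M π β := by
    intro π β γ hgb
    have : M π γ ≤ ∫ ω, (1 + ε) * Real.exp (-β * R π ω) ∂μ := by
      refine integral_mono_ae (hint π γ) ((hint π β).const_mul _) ?_
      filter_upwards [hbdd π] with ω hω
      have h1 : (β - γ) * R π ω ≤ Real.log (1 + ε) := by
        calc (β - γ) * R π ω ≤ |(β - γ) * R π ω| := le_abs_self _
          _ = |γ - β| * |R π ω| := by rw [abs_mul, abs_sub_comm]
          _ ≤ |γ - β| * H := mul_le_mul_of_nonneg_left hω (abs_nonneg _)
          _ ≤ Real.log (1 + ε) := hgb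
      have : Real.exp (-γ * R π ω) = Real.exp ((β - γ) * R π ω) * Real.exp (-β * R π ω) := by
        rw [← Real.exp_add]; ring_nf
      rw [this]
      have h2 : Real.exp ((β - γ) * R π ω) ≤ 1 + ε := by
        calc Real.exp ((β - γ) * R π ω) ≤ Real.exp (Real.log (1 + ε)) := Real.exp_le_exp.2 h1
          _ = 1 + ε := Real.exp_log (by linarith)
      exact mul_le_mul_of_nonneg_right h2 (Real.exp_pos _).le
    calc M π γ ≤ ∫ ω, (1 + ε) * Real.exp (-β * R π ω) ∂μ := this
      _ = (1 + ε) * M π β := by rw [integral_const_mul]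
  -- tail lemma : for β ≥ βmin, M π β ≥ 1
  have hβminnn : 0 ≤ βmin := by
    rw [hβmin]
    apply div_nonneg _ (by linarith)
    exact Real.log_nonneg ((le_div_iff₀ hp0).2 (by linarith))
  have htailM : ∀ π, ∀ β : ℝ, βmin ≤ β → 1 ≤ M π β := by
    intro π β hβ
    have hβnn : 0 ≤ β := le_trans hβminnn hβ
    set s : Set Ω := {ω | R π ω ≤ a} with hs
    have hsmeas : MeasurableSet s := measurableSet_le (hmeas π) measurable_const
    have hind : ∫ ω, s.indicator (fun _ => Real.exp (-β * a)) ω ∂μ ≤ M π β := by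
      refine integral_mono ((integrable_const _).indicator hsmeas) (hint π β) ?_
      intro ω
      by_cases hω : ω ∈ s
      · rw [Set.indicator_of_mem hω]
        have hωa : R π ω ≤ a := hω
        exact Real.exp_le_exp.2 (by nlinarith)
      · rw [Set.indicator_of_notMem hω]
        exact (Real.exp_pos _).le
    rw [integral_indicator_const _ hsmeas] at hind
    have hμs : p ≤ (μ s).toReal := by
      have h1 : ENNReal.ofReal p ≤ μ s := htail π
      have h2 : (ENNReal.ofReal p).toReal ≤ (μ s).toReal :=
        ENNReal.toReal_mono (measure_ne_top μ s) h1
      rwa [ENNReal.toReal_ofReal hp0.le] at h2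
    have hkey : 1 ≤ (μ s).toReal * Real.exp (-β * a) := by
      have hexp : Real.exp (βmin * (-a)) ≤ Real.exp (-β * a) := by
        apply Real.exp_le_exp.2
        have : -β * a = β * (-a) := by ring
        rw [this]
        exact mul_le_mul_of_nonneg_right hβ (by linarith)
      have hβa : βmin * (-a) = Real.log (1 / p) := by
        rw [hβmin]; field_simp
        exact mul_div_cancel_right₀ _ (ne_of_lt ha)
      rw [hβa, Real.exp_log (by positivity)] at hexp
      calc (1 : ℝ) = p * (1 / p) := by field_simp
        _ ≤ (μ s).toReal * Real.exp (-β * a) :=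
          mul_le_mul hμs hexp (by positivity) ((ENNReal.toReal_nonneg))
    calc (1 : ℝ) ≤ (μ s).toReal * Real.exp (-β * a) := hkey
      _ = (μ s).toReal • Real.exp (-β * a) := rfl
      _ ≤ M π β := hind
  have hε1 : (0:ℝ) < 1 + ε := by linarith
  have hBM : B = ⨅ π : P, ⨅ β : Set.Ici (0:ℝ), M π (β : ℝ) := hB
  have hBtM : Btilde = ⨅ π : P, ⨅ k : Finset.range (K + 1), M π (h * ((k : ℕ) : ℝ)) := hBt
  have inst1 : Nonempty (Set.Ici (0:ℝ)) := ⟨⟨0, Set.mem_Ici.2 le_rfl⟩⟩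
  have inst2 : Nonempty {x // x ∈ Finset.range (K+1)} := ⟨⟨0, Finset.mem_range.2 (Nat.succ_pos K)⟩⟩
  have hGle : ∀ (π : P) (k : ℕ), k < K + 1 →
      (⨅ j : Finset.range (K+1), M π (h * ((j:ℕ):ℝ))) ≤ M π (h * (k:ℝ)) := by
    intro π k hk
    have hbb : BddBelow (Set.range (fun j : Finset.range (K+1) => M π (h * ((j:ℕ):ℝ)))) := by
      refine ⟨0, ?_⟩
      rintro x ⟨j, rfl⟩
      exact hMnonneg π _
    exact ciInf_le hbb ⟨k, Finset.mem_range.2 hk⟩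
  have hIle : ∀ π : P, (⨅ π : P, ⨅ β : Set.Ici (0:ℝ), M π (β:ℝ)) ≤
      ⨅ β : Set.Ici (0:ℝ), M π (β:ℝ) := fun π =>
    ciInf_le (Set.Finite.bddBelow (Set.finite_range _)) π
  constructor
  · rw [hBM, hBtM]
    refine le_ciInf fun π => le_ciInf fun k => ?_
    refine (hIle π).trans ?_
    have hbb : BddBelow (Set.range (fun β : Set.Ici (0:ℝ) => M π (β:ℝ))) := by
      refine ⟨0, ?_⟩
      rintro x ⟨β, rfl⟩
      exact hMnonneg π _
    exact ciInf_le hbb ⟨h * ((k:ℕ):ℝ), Set.mem_Ici.2 (mul_nonneg hhpos.le (Nat.cast_nonneg _))⟩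
  -- key claim
  have hkey : ∀ (π : P) (β : ℝ), 0 ≤ β →
      (⨅ k : Finset.range (K+1), M π (h * ((k:ℕ):ℝ))) ≤ (1 + ε) * M π β := by
    intro π β hβ0
    by_cases hc : βmin ≤ β
    · have h1 := hGle π 0 (Nat.succ_pos K)
      have h2 : M π (h * ((0:ℕ):ℝ)) = 1 := by
        simpa using hM0 π
      calc (⨅ k : Finset.range (K+1), M π (h * ((k:ℕ):ℝ)))
          ≤ M π (h * ((0:ℕ):ℝ)) := h1
        _ = 1 := h2
        _ ≤ M π β := htailM π β hc
        _ ≤ (1 + ε) * M π β := by nlinarith [hMnonneg π β]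
    · push_neg at hc
      set k := ⌊β / h + 1/2⌋₊ with hkdef
      have hkK : k < K + 1 := by
        have hbh : β / h ≤ βmin / h := by gcongr
        have hK2 : βmin / h ≤ (K:ℝ) := by rw [hK]; exact Nat.le_ceil _
        have hx : β / h + 1/2 < ((K+1:ℕ):ℝ) := by push_cast; linarith
        exact (Nat.floor_lt (by positivity)).2 hx
      have hfl : (k:ℝ) ≤ β / h + 1/2 := Nat.floor_le (by positivity)
      have hfl2 : β / h + 1/2 < (k:ℝ) + 1 := Nat.lt_floor_add_one _
      have hβh : β / h * h = β := div_mul_cancel₀ _ (ne_of_gt hhpos)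
      have ht1 : h * (k:ℝ) ≤ h * (β/h + 1/2) := mul_le_mul_of_nonneg_left hfl hhpos.le
      have ht2 : h * (β/h + 1/2 - 1) < h * (k:ℝ) := by
        apply mul_lt_mul_of_pos_left _ hhpos; linarith
      have heq1 : h * (β/h + 1/2) = β + h/2 := by
        have := hβh; nlinarith [hβh]
      have h1 : h * (k:ℝ) - β ≤ h / 2 := by nlinarith
      have h2 : -(h/2) ≤ h * (k:ℝ) - β := by nlinarith
      have hhH : h / 2 * H = Real.log (1+ε) := by
        rw [hh]; field_simp
      have habs : |h * (k:ℝ) - β| * H ≤ Real.log (1 + ε) := by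
        calc |h * (k:ℝ) - β| * H ≤ (h/2) * H :=
            mul_le_mul_of_nonneg_right (abs_le.2 ⟨h2, h1⟩) hH.le
          _ = Real.log (1+ε) := hhH
      exact (hGle π k hkK).trans (hshift π β (h * (k:ℝ)) habs)
  obtain ⟨π0, hπ0⟩ := Finite.exists_min (fun π : P => ⨅ β : Set.Ici (0:ℝ), M π (β:ℝ))
  have hBeq : B = ⨅ β : Set.Ici (0:ℝ), M π0 (β:ℝ) := by
    rw [hBM]
    exact le_antisymm (hIle π0) (le_ciInf hπ0)
  have hG : (⨅ k : Finset.range (K+1), M π0 (h * ((k:ℕ):ℝ))) ≤ (1+ε) * B := by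
    rw [hBeq]
    have hdiv : (⨅ k : Finset.range (K+1), M π0 (h * ((k:ℕ):ℝ))) / (1+ε) ≤
        ⨅ β : Set.Ici (0:ℝ), M π0 (β:ℝ) :=
      le_ciInf fun β => (div_le_iff₀ hε1).2
        ((hkey π0 β (Set.mem_Ici.1 β.2)).trans (le_of_eq (mul_comm _ _)))
    rw [mul_comm]
    exact (div_le_iff₀ hε1).1 hdiv
  rw [hBtM]
  exact (ciInf_le (Set.Finite.bddBelow (Set.finite_range _)) π0).trans hG
end

section
/- Let (Ω, 𝒫) be a probability space and X : Ω → ℝ a random variable that is almost surely bounded. Define VaR_α(X) = inf{x ∈ ℝ : 𝒫(X ≤ x) ≥ α} for α ∈ (0, 1]. Then for every β < 0 and α ∈ (0, 1]: (1/β)·log(𝔼[exp(β·X)]) − (1/β)·log(α) ≤ VaR_α(X). In particular, the entropic value at risk EVaR_α(X) = sup_{β<0} {(1/β)·log(𝔼[exp(β·X)]) − (1/β)·log(α)} is a lower bound for VaR_α(X). -/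
open MeasureTheory

theorem stmt_13 {Ω : Type*} [MeasurableSpace Ω] (μ : Measure Ω) [IsProbabilityMeasure μ]
    (X : Ω → ℝ) (hX : Measurable X) (C : ℝ) (hbdd : ∀ᵐ ω ∂μ, |X ω| ≤ C)
    (VaR : ℝ → ℝ)
    (hVaR : ∀ α, VaR α = sInf {x : ℝ | ENNReal.ofReal α ≤ μ {ω | X ω ≤ x}}) :
    (∀ β < (0 : ℝ), ∀ α ∈ Set.Ioc (0 : ℝ) 1,
      (1 / β) * Real.log (∫ ω, Real.exp (β * X ω) ∂μ) - (1 / β) * Real.log α ≤ VaR α) ∧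
    (∀ α ∈ Set.Ioc (0 : ℝ) 1,
      sSup {v : ℝ | ∃ β < (0 : ℝ),
          v = (1 / β) * Real.log (∫ ω, Real.exp (β * X ω) ∂μ) - (1 / β) * Real.log α}
        ≤ VaR α) := by
  have key : ∀ β < (0 : ℝ), ∀ α ∈ Set.Ioc (0 : ℝ) 1,
      (1 / β) * Real.log (∫ ω, Real.exp (β * X ω) ∂μ) - (1 / β) * Real.log α ≤ VaR α := by
    intro β hβ α hα
    obtain ⟨hα0, hα1⟩ := hα
    set S : Set ℝ := {x : ℝ | ENNReal.ofReal α ≤ μ {ω | X ω ≤ x}} with hS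
    have hnull : μ {ω | ¬ |X ω| ≤ C} = 0 := ae_iff.mp hbdd
    -- C ∈ S
    have haeC : ∀ᵐ ω ∂μ, X ω ≤ C := hbdd.mono fun ω h => (abs_le.mp h).2
    have hmC : MeasurableSet {ω | X ω ≤ C} := hX measurableSet_Iic
    have h1 : μ {ω | X ω ≤ C} = 1 := by
      have hc : μ {ω | X ω ≤ C}ᶜ = 0 := by
        have := ae_iff.mp haeC
        simpa [Set.compl_setOf] using this
      exact (prob_compl_eq_zero_iff hmC).mp hc
    have hCS : C ∈ S := by
      rw [Set.mem_setOf_eq, h1]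
      exact ENNReal.ofReal_le_one.mpr hα1
    have hSne : S.Nonempty := ⟨C, hCS⟩
    have hSbdd : BddBelow S := by
      refine ⟨-C, fun x hx => ?_⟩
      by_contra h
      push_neg at h
      have hsub : {ω | X ω ≤ x} ⊆ {ω | ¬ |X ω| ≤ C} := by
        intro ω hω
        simp only [Set.mem_setOf_eq, not_le] at *
        have hlt : X ω < -C := lt_of_le_of_lt hω h
        calc C < -X ω := by linarith
          _ ≤ |X ω| := neg_le_abs _
      have h0 : μ {ω | X ω ≤ x} = 0 := measure_mono_null hsub hnull
      rw [Set.mem_setOf_eq, h0, le_zero_iff] at hx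
      exact absurd hx (ENNReal.ofReal_pos.mpr hα0).ne'
    set v : ℝ := sInf S with hv
    have hVaRv : VaR α = v := hVaR α
    -- right continuity: v ∈ S (the measure of {X ≤ v} is at least α)
    have hup : ∀ n : ℕ, ENNReal.ofReal α ≤ μ {ω | X ω ≤ v + 1 / (n + 1)} := by
      intro n
      have hpos : (0:ℝ) < 1 / (n + 1) := by positivity
      have hlt : v < v + 1 / (n + 1) := by linarith
      obtain ⟨s, hsS, hslt⟩ := exists_lt_of_csInf_lt hSne hlt
      exact le_trans hsS (measure_mono fun ω hω => le_trans hω hslt.le)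
    have hInter : {ω | X ω ≤ v} = ⋂ n : ℕ, {ω | X ω ≤ v + 1 / (n + 1)} := by
      ext ω
      simp only [Set.mem_iInter, Set.mem_setOf_eq]
      constructor
      · intro h n
        have hpos : (0:ℝ) < 1 / (n + 1) := by positivity
        linarith
      · intro h
        by_contra hlt
        push_neg at hlt
        obtain ⟨n, hn⟩ := exists_nat_one_div_lt (sub_pos.mpr hlt)
        exact absurd (h n) (by push_cast at hn ⊢; linarith)
    have hanti : Antitone (fun n : ℕ => {ω | X ω ≤ v + 1 / (n + 1)}) := by
      intro n m hnm ω hω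
      simp only [Set.mem_setOf_eq] at *
      have hc : (n:ℝ) ≤ m := by exact_mod_cast hnm
      have : (1:ℝ) / (m + 1) ≤ 1 / (n + 1) :=
        one_div_le_one_div_of_le (by positivity) (by linarith)
      linarith
    have hmn : ∀ n : ℕ, MeasurableSet {ω | X ω ≤ v + 1 / (n + 1)} :=
      fun n => hX measurableSet_Iic
    have hmeasα : ENNReal.ofReal α ≤ μ {ω | X ω ≤ v} := by
      rw [hInter, hanti.measure_iInter (fun n => (hmn n).nullMeasurableSet)
        ⟨0, measure_ne_top μ _⟩]
      exact le_iInf hup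
    -- the Chernoff-type bound
    have hint : Integrable (fun ω => Real.exp (β * X ω)) μ := by
      apply Integrable.mono' (integrable_const (Real.exp (|β| * C)))
      · exact (Real.measurable_exp.comp (measurable_const.mul hX)).aestronglyMeasurable
      · filter_upwards [hbdd] with ω hω
        rw [Real.norm_eq_abs, Real.abs_exp]
        apply Real.exp_le_exp.mpr
        calc β * X ω ≤ |β * X ω| := le_abs_self _
          _ = |β| * |X ω| := abs_mul _ _
          _ ≤ |β| * C := mul_le_mul_of_nonneg_left hω (abs_nonneg β)
    have hmv : MeasurableSet {ω | X ω ≤ v} := hX measurableSet_Iic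
    have hptwise : ∀ ω, Set.indicator {ω | X ω ≤ v} (fun _ => Real.exp (β * v)) ω
        ≤ Real.exp (β * X ω) := by
      intro ω
      by_cases hω : ω ∈ {ω | X ω ≤ v}
      · rw [Set.indicator_of_mem hω]
        exact Real.exp_le_exp.mpr (mul_le_mul_of_nonpos_left hω hβ.le)
      · rw [Set.indicator_of_notMem hω]
        exact (Real.exp_pos _).le
    have hlow : Real.exp (β * v) * (μ {ω | X ω ≤ v}).toReal
        ≤ ∫ ω, Real.exp (β * X ω) ∂μ := by
      have := integral_indicator_const (Real.exp (β * v)) hmv (μ := μ)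
      calc Real.exp (β * v) * (μ {ω | X ω ≤ v}).toReal
          = ∫ ω, Set.indicator {ω | X ω ≤ v} (fun _ => Real.exp (β * v)) ω ∂μ := by
            rw [this, smul_eq_mul, mul_comm]; rfl
        _ ≤ ∫ ω, Real.exp (β * X ω) ∂μ :=
            integral_mono ((integrable_const _).indicator hmv) hint hptwise
    have htR : α ≤ (μ {ω | X ω ≤ v}).toReal := by
      have := ENNReal.toReal_mono (measure_ne_top μ _) hmeasα
      rwa [ENNReal.toReal_ofReal hα0.le] at this
    have hE : α * Real.exp (β * v) ≤ ∫ ω, Real.exp (β * X ω) ∂μ := by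
      calc α * Real.exp (β * v) ≤ (μ {ω | X ω ≤ v}).toReal * Real.exp (β * v) :=
            mul_le_mul_of_nonneg_right htR (Real.exp_pos _).le
        _ = Real.exp (β * v) * (μ {ω | X ω ≤ v}).toReal := mul_comm _ _
        _ ≤ _ := hlow
    have hEpos : (0:ℝ) < ∫ ω, Real.exp (β * X ω) ∂μ :=
      lt_of_lt_of_le (by positivity) hE
    have hlog : Real.log α + β * v ≤ Real.log (∫ ω, Real.exp (β * X ω) ∂μ) := by
      have := Real.log_le_log (by positivity) hE
      rwa [Real.log_mul hα0.ne' (Real.exp_pos _).ne', Real.log_exp] at this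
    rw [hVaRv]
    set L := Real.log (∫ ω, Real.exp (β * X ω) ∂μ)
    have heq : (1 / β) * L - (1 / β) * Real.log α = (L - Real.log α) / β := by ring
    rw [heq, div_le_iff_of_neg hβ]
    linarith
  refine ⟨key, fun α hα => ?_⟩
  apply csSup_le
  · exact ⟨_, ⟨-1, by norm_num, rfl⟩⟩
  · rintro x ⟨β, hβ, rfl⟩
    exact key β hβ α hα
end

section
/- Let x_1 < x_2 < ⋯ < x_n be real numbers and μ = (μ_1,…,μ_n) a probability vector. Let m = ∑_i μ_i·x_i be the mean and v = ∑_i μ_i·(x_i − m)² the variance. Then (EntRM_β(μ) − m)/β tends to v/2 as β → 0 with β ≠ 0; that is, EntRM_β(μ) = m + (β/2)·v + o(β) as β → 0. -/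
theorem stmt_15 (n : ℕ) (x : Fin n → ℝ) (hx : StrictMono x)
    (μ : Fin n → ℝ) (hnn : ∀ i, 0 ≤ μ i) (hsum : ∑ i, μ i = 1)
    (m v : ℝ) (hm : m = ∑ i, μ i * x i) (hv : v = ∑ i, μ i * (x i - m) ^ 2) :
    Filter.Tendsto (fun β => (entRMvec n x μ β - m) / β)
      (nhdsWithin 0 {(0 : ℝ)}ᶜ) (nhds (v / 2)) := by
  set S : ℝ → ℝ := fun β => ∑ i, μ i * Real.exp (β * x i) with hS_def
  set S1 : ℝ → ℝ := fun β => ∑ i, μ i * (Real.exp (β * x i) * x i) with hS1_def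
  set S2 : ℝ → ℝ := fun β => ∑ i, μ i * (Real.exp (β * x i) * x i * x i) with hS2_def
  have hSpos : ∀ β, 0 < S β := by
    intro β
    have hex : ∃ i, 0 < μ i := by
      by_contra h
      push_neg at h
      have : ∀ i, μ i = 0 := fun i => le_antisymm (h i) (hnn i)
      simp [this] at hsum
    obtain ⟨i, hi⟩ := hex
    apply Finset.sum_pos'
    · intro j _
      exact mul_nonneg (hnn j) (Real.exp_pos _).le
    · exact ⟨i, Finset.mem_univ i, mul_pos hi (Real.exp_pos _)⟩
  have hS0 : S 0 = 1 := by simp [hS_def, hsum]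
  have hS10 : S1 0 = m := by simp [hS1_def, hm]
  have hS20 : S2 0 = ∑ i, μ i * (x i * x i) := by simp [hS2_def, mul_assoc]
  have hSd : ∀ β, HasDerivAt S (S1 β) β := by
    intro β
    apply HasDerivAt.fun_sum
    intro i _
    exact ((hasDerivAt_mul_const (x i)).exp).const_mul (μ i)
  have hS1d : ∀ β, HasDerivAt S1 (S2 β) β := by
    intro β
    apply HasDerivAt.fun_sum
    intro i _
    exact (((hasDerivAt_mul_const (x i)).exp).mul_const (x i)).const_mul (μ i)
  -- h = S1 / S has derivative v at 0
  have hv' : v = ∑ i, μ i * (x i * x i) - m * m := by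
    rw [hv]
    have : ∀ i, μ i * (x i - m) ^ 2 = μ i * (x i * x i) - 2 * m * (μ i * x i) + m * m * μ i := by
      intro i; ring
    rw [Finset.sum_congr rfl fun i _ => this i]
    rw [Finset.sum_add_distrib, Finset.sum_sub_distrib, ← Finset.mul_sum, ← Finset.mul_sum,
      hsum, ← hm]
    ring
  have hh : HasDerivAt (fun β => S1 β / S β) v 0 := by
    have := (hS1d 0).fun_div (hSd 0) (hSpos 0).ne'
    refine this.congr_deriv ?_
    rw [hS0, hS10, hS20, hv']
    ring
  -- the slope limit
  have hslope : Filter.Tendsto (fun β => (S1 β / S β - m) / β)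
      (nhdsWithin 0 {(0:ℝ)}ᶜ) (nhds v) := by
    have := hasDerivAt_iff_tendsto_slope.mp hh
    refine this.congr' ?_
    filter_upwards with β
    simp [slope, hS0, hS10, div_eq_inv_mul]
  have hdiv : Filter.Tendsto (fun β => (S1 β / S β - m) / (2 * β))
      (nhdsWithin 0 {(0:ℝ)}ᶜ) (nhds (v / 2)) := by
    have := hslope.div_const 2
    refine this.congr fun β => ?_
    rw [div_div]
    ring_nf
  -- L'Hôpital
  have hN : ∀ β, HasDerivAt (fun β => Real.log (S β) - m * β) (S1 β / S β - m) β := by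
    intro β
    exact ((hSd β).log (hSpos β).ne').sub (by simpa using (hasDerivAt_id β).const_mul m)
  have hD : ∀ β : ℝ, HasDerivAt (fun β : ℝ => β ^ 2) (2 * β) β := by
    intro β
    simpa using hasDerivAt_pow 2 β
  have hlh : Filter.Tendsto (fun β => (Real.log (S β) - m * β) / β ^ 2)
      (nhdsWithin 0 {(0:ℝ)}ᶜ) (nhds (v / 2)) := by
    apply HasDerivAt.lhopital_zero_nhdsNE (f' := fun β => S1 β / S β - m) (g' := fun β => 2 * β)
    · filter_upwards with β; exact hN β
    · filter_upwards with β; exact hD β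
    · filter_upwards [self_mem_nhdsWithin] with β hβ
      exact mul_ne_zero two_ne_zero hβ
    · have hc : Continuous fun β => Real.log (S β) - m * β := by
        have : Differentiable ℝ fun β => Real.log (S β) - m * β :=
          fun β => (hN β).differentiableAt
        exact this.continuous
      have := (hc.tendsto 0).mono_left (nhdsWithin_le_nhds (s := {(0:ℝ)}ᶜ))
      simpa [hS0] using this
    · have : Filter.Tendsto (fun β : ℝ => β ^ 2) (nhds 0) (nhds ((0:ℝ) ^ 2)) :=
        (continuous_pow 2).tendsto 0
      simpa using this.mono_left (nhdsWithin_le_nhds (s := {(0:ℝ)}ᶜ))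
    · exact hdiv
  refine hlh.congr' ?_
  filter_upwards [self_mem_nhdsWithin] with β hβ
  have hβ' : β ≠ 0 := hβ
  simp only [entRMvec, if_neg hβ', hS_def]
  field_simp
end
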